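/- arXiv:1211.0846 — 9 statements merged into one kernel-verified Lean document; each statement's English description precedes it below -/
import Mathlib

section
/- The map $a_- : \mathrm{Homeo}_0(\mathbb{S}^1) \to \mathrm{Homeo}(\mathbb{A})$ defined by $a_-(f)(r, \theta) = (\tilde{f}(\tilde{\theta}) - \tilde{f}(\tilde{\theta} - r), f(\theta))$ is a group homomorphism. -/
noncomputable section

/-- The circle `ℝ/ℤ`. -/
abbrev S1 : Type := AddCircle (1 : ℝ)

/-- The projection `ℝ → ℝ/ℤ`. -/
def pr : ℝ → S1 := fun x => (x : S1)

instance : Fact ((0 : ℝ) < 1) := ⟨one_pos⟩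

/-- A canonical representative (lift in `[0,1)`) of a point of the circle. -/
def rep (θ : S1) : ℝ := (AddCircle.equivIco 1 0 θ : ℝ)

/-- `F` is a lift of the circle homeomorphism `f`: an increasing homeomorphism of `ℝ`
commuting with integer translations and projecting to `f`. -/
def IsLift (f : S1 ≃ₜ S1) (F : ℝ ≃ₜ ℝ) : Prop :=
  StrictMono F ∧ (∀ x : ℝ, F (x + 1) = F x + 1) ∧ ∀ x : ℝ, f (pr x) = pr (F x)

/-- The elementary action `a₋` on the annulus `[0,1] × S¹ ⊆ ℝ × S¹`, computed using the
lift `F` of `f`:  `(r, θ) ↦ (F(θ̃) - F(θ̃ - r), f θ)` (the first coordinate does not depend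
on the chosen lifts). -/
def aMinus (f : S1 ≃ₜ S1) (F : ℝ ≃ₜ ℝ) : ℝ × S1 → ℝ × S1 :=
  fun p => (F (rep p.2) - F (rep p.2 - p.1), f p.2)

/-- The elementary action `a₊` on the annulus `[0,1] × S¹ ⊆ ℝ × S¹`:
`(r, θ) ↦ (F(θ̃ + r) - F(θ̃), f θ)`. -/
def aPlus (f : S1 ≃ₜ S1) (F : ℝ ≃ₜ ℝ) : ℝ × S1 → ℝ × S1 :=
  fun p => (F (rep p.2 + p.1) - F (rep p.2), f p.2)

/-!
Since a lift commutes with integer translations, the first coordinate of `a₋(f)` at `(r, θ)`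
can be computed from any lift `x` of `θ`: it is `F x - F (x - r)`. Taking `G x` as the lift of
`g θ`, the composite telescopes: `F (G x) - F (G x - (G x - G (x - r))) = F (G x) - F (G (x - r))`.
-/

theorem IsLift.map_sub_int {f : S1 ≃ₜ S1} {F : ℝ ≃ₜ ℝ} (hF : IsLift f F) (x : ℝ) (n : ℤ) :
    F (x - n) = F x - n :=
  AddConstMapClass.map_sub_int (⟨F, hF.2.1⟩ : AddConstMap ℝ ℝ 1 1) x n

theorem IsLift.trans {f g : S1 ≃ₜ S1} {F G : ℝ ≃ₜ ℝ} (hF : IsLift f F) (hG : IsLift g G) :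
    IsLift (g.trans f) (G.trans F) := by
  refine ⟨hF.1.comp hG.1, fun x => ?_, fun x => ?_⟩
  · rw [Homeomorph.trans_apply, Homeomorph.trans_apply, hG.2.1, hF.2.1]
  · rw [Homeomorph.trans_apply, Homeomorph.trans_apply, hG.2.2, hF.2.2]

theorem rep_pr (x : ℝ) : rep (pr x) = Int.fract x := by
  simp [rep, pr]

theorem aMinus_pr {f : S1 ≃ₜ S1} {F : ℝ ≃ₜ ℝ} (hF : IsLift f F) (r x : ℝ) :
    aMinus f F (r, pr x) = (F x - F (x - r), pr (F x)) := by
  have hshift : rep (pr x) - r = x - r - ⌊x⌋ := by rw [rep_pr, Int.fract]; ring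
  simp only [aMinus]
  rw [hshift, rep_pr, Int.fract, hF.map_sub_int, hF.map_sub_int, hF.2.2]
  congr 1
  ring

theorem stmt2_general (f g : S1 ≃ₜ S1) (F G : ℝ ≃ₜ ℝ) (hF : IsLift f F) (hG : IsLift g G)
    (p : ℝ × S1) :
    aMinus (g.trans f) (G.trans F) p = aMinus f F (aMinus g G p) := by
  obtain ⟨r, θ⟩ := p
  obtain ⟨x, rfl⟩ : ∃ x, pr x = θ := QuotientAddGroup.mk_surjective θ
  rw [aMinus_pr (hF.trans hG), aMinus_pr hG, aMinus_pr hF]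
  simp only [Homeomorph.trans_apply, sub_sub_cancel]

/-- The map `a₋` is a group homomorphism: `a₋(f ∘ g) = a₋(f) ∘ a₋(g)` on the annulus
(`F` and `G` being lifts of `f` and `g`, `F ∘ G` is a lift of `f ∘ g`). -/
theorem stmt2 (f g : S1 ≃ₜ S1) (F G : ℝ ≃ₜ ℝ) (hF : IsLift f F) (hG : IsLift g G)
    (p : ℝ × S1) (hp : p.1 ∈ Set.Icc (0 : ℝ) 1) :
    aMinus (g.trans f) (G.trans F) p = aMinus f F (aMinus g G p) :=
  stmt2_general f g F G hF hG p
end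
end

section
/- The actions $a_+$ and $a_-$ of $\mathrm{Homeo}_0(\mathbb{S}^1)$ on the closed annulus $\mathbb{A} = [0,1] \times \mathbb{S}^1$ are conjugate via the homeomorphism $h(r, \theta) = (r, \theta + r)$ of $\mathbb{A}$; that is, for every $f \in \mathrm{Homeo}_0(\mathbb{S}^1)$, $h \circ a_-(f) = a_+(f) \circ h$ (up to appropriate orientation of the identity). -/
noncomputable section

/-!
Write `θ̃ = rep θ`. The point `θ̃ + r` is a lift of `θ + r`, so it differs from the canonical
lift `rep (θ + r)` by an integer `n`. Since `F` commutes with integer translations, both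
first coordinates equal `F (θ̃ + r) - F θ̃`, and the second coordinates agree because
`F` projects to `f`.
-/

lemma pr_rep (θ : S1) : pr (rep θ) = θ := (AddCircle.equivIco 1 0).symm_apply_apply θ

lemma pr_add (x y : ℝ) : pr (x + y) = pr x + pr y := rfl

lemma exists_int_eq_add_of_pr_eq {x y : ℝ} (h : pr x = pr y) : ∃ n : ℤ, y = x + n := by
  have : ((y - x : ℝ) : S1) = 0 := sub_eq_zero.mpr h.symm
  obtain ⟨n, hn⟩ := (AddCircle.coe_eq_zero_iff 1).mp this
  exact ⟨n, by rw [zsmul_one] at hn; linarith⟩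

namespace IsLift

variable {f : S1 ≃ₜ S1} {F : ℝ ≃ₜ ℝ}

def toCircleDeg1Lift (hF : IsLift f F) : CircleDeg1Lift :=
  ⟨⟨F, hF.1.monotone⟩, hF.2.1⟩

lemma map_add_int (hF : IsLift f F) (x : ℝ) (n : ℤ) : F (x + n) = F x + n :=
  hF.toCircleDeg1Lift.map_add_int x n

lemma apply_pr (hF : IsLift f F) (x : ℝ) : f (pr x) = pr (F x) := hF.2.2 x

end IsLift

theorem stmt3_general (f : S1 ≃ₜ S1) (F : ℝ ≃ₜ ℝ) (hF : IsLift f F)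
    (hconj : ℝ × S1 → ℝ × S1) (hdef : hconj = fun p => (p.1, p.2 + pr p.1))
    (p : ℝ × S1) :
    hconj (aPlus f F p) = aMinus f F (hconj p):= by
  subst hdef
  obtain ⟨r, θ⟩ := p
  have hθr : pr (rep θ + r) = θ + pr r := by rw [pr_add, pr_rep]
  obtain ⟨n, hn⟩ := exists_int_eq_add_of_pr_eq (hθr.trans (pr_rep _).symm)
  refine Prod.ext ?_ ?_
  · have hshift : rep (θ + pr r) - r = rep θ + n := by rw [hn]; ring
    simp only [aPlus, aMinus]
    rw [hshift, hn, hF.map_add_int, hF.map_add_int]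
    ring
  · calc f θ + pr (F (rep θ + r) - F (rep θ))
        = pr (F (rep θ)) + pr (F (rep θ + r) - F (rep θ)) := by rw [← hF.apply_pr, pr_rep]
      _ = pr (F (rep θ + r)) := by rw [← pr_add, add_sub_cancel]
      _ = f (θ + pr r) := by rw [← hF.apply_pr, hθr]

/-- The conjugacy `h(r, θ) = (r, θ + r)` between `a₊` and `a₋`:
for every orientation-preserving homeomorphism `f` of the circle (with lift `F`),
`h ∘ a₊(f) = a₋(f) ∘ h` on the annulus. -/
theorem stmt3 (f : S1 ≃ₜ S1) (F : ℝ ≃ₜ ℝ) (hF : IsLift f F)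
    (hconj : ℝ × S1 → ℝ × S1) (hdef : hconj = fun p => (p.1, p.2 + pr p.1))
    (p : ℝ × S1) (hp : p.1 ∈ Set.Icc (0 : ℝ) 1) :
    hconj (aPlus f F p) = aMinus f F (hconj p) :=
  stmt3_general f F hF hconj hdef p
end
end

section
/- Let $I$ and $J$ be disjoint compact intervals with non-empty interior in $\mathbb{R}$. For any compactly supported homeomorphism $g$ of $\mathbb{R}$, there exist homeomorphisms $g_1, g_3$ fixing pointwise a neighbourhood of $I$ and $g_2$ fixing pointwise a neighbourhood of $J$, all compactly supported, such that $g = g_1 g_2 g_3$. -/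
/-!
A compactly supported homeomorphism `g` of `ℝ` is increasing. Say `I = [a,b]` lies left of
`J = [c,d]`. If `g b < c`, choose `b < p < t` with `p < g t < c` and glue the identity on
`(-∞, p]`, the affine map on `[p, t]` and `g` on `[t, ∞)` into a homeomorphism `h`; then `h`
fixes `(-∞, p) ⊇ I` and `g h⁻¹` fixes `(g t, ∞) ⊇ J`, so `g = (g h⁻¹) h`. If `g b ≥ c` then
`g⁻¹ b < b < c`, and the factorisation of `g⁻¹` inverts to one of `g`. When `J` lies left of
`I`, conjugate by `x ↦ -x`.
-/

noncomputable section

/-- `g` pointwise fixes a neighbourhood of `A`. -/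
def FixesNbhd (g : ℝ ≃ₜ ℝ) (A : Set ℝ) : Prop :=
  ∃ U : Set ℝ, IsOpen U ∧ A ⊆ U ∧ ∀ x ∈ U, g x = x

/-- `g` is compactly supported. -/
def CompactSupp (g : ℝ ≃ₜ ℝ) : Prop := IsCompact (closure {x | g x ≠ x})

open Set Filter

lemma lt_or_lt_of_disjoint_Icc {α : Type*} [LinearOrder α] {a b c d : α} (hab : a ≤ b)
    (hcd : c ≤ d) (h : Disjoint (Icc a b) (Icc c d)) : b < c ∨ d < a := by
  by_contra! hle
  exact h.ne_of_mem ⟨le_max_left a c, max_le hab hle.1⟩ ⟨le_max_right a c, max_le hle.2 hcd⟩ rfl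

namespace OrderIso

lemma exists_eqOn_Iic_eqOn_Ici_of_eq {α : Type*} [LinearOrder α] (φ ψ : α ≃o α) {a : α}
    (h : φ a = ψ a) : ∃ χ : α ≃o α, EqOn χ φ (Iic a) ∧ EqOn χ ψ (Ici a) := by
  let f : α → α := fun x => if x ≤ a then φ x else ψ x
  have hφ : EqOn f φ (Iic a) := fun x (hx : x ≤ a) => if_pos hx
  have hψ : EqOn f ψ (Ici a) := fun x (hx : a ≤ x) => by
    rcases hx.eq_or_lt with rfl | hx
    · exact (if_pos le_rfl).trans h
    · exact if_neg hx.not_ge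
  have hmono : StrictMono f :=
    (φ.strictMono.strictMonoOn _).congr hφ.symm |>.Iic_union_Ici <|
      (ψ.strictMono.strictMonoOn _).congr hψ.symm
  have hsurj : Function.Surjective f := fun y => by
    rcases le_or_gt y (φ a) with hy | hy
    · exact ⟨φ.symm y, by rw [hφ (φ.symm_apply_le.2 hy), apply_symm_apply]⟩
    · exact ⟨ψ.symm y, by rw [hψ (ψ.le_symm_apply.2 (h ▸ hy.le)), apply_symm_apply]⟩
  exact ⟨hmono.orderIsoOfSurjective f hsurj, hφ, hψ⟩

lemma exists_eqOn_Iic_eqOn_Ici_of_lt {𝕜 : Type*} [Field 𝕜] [LinearOrder 𝕜]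
    [IsStrictOrderedRing 𝕜] (φ ψ : 𝕜 ≃o 𝕜) {p t : 𝕜} (hpt : p < t) (h : φ p < ψ t) :
    ∃ χ : 𝕜 ≃o 𝕜, EqOn χ φ (Iic p) ∧ EqOn χ ψ (Ici t) := by
  set slope := (ψ t - φ p) / (t - p)
  have hslope : 0 < slope := div_pos (sub_pos.2 h) (sub_pos.2 hpt)
  let A := (mulLeft₀ slope hslope).trans (addRight (φ p - slope * p))
  have hAp : A p = φ p := by simp [A]
  have hAt : A t = ψ t := by
    simp only [A, trans_apply, mulLeft₀_apply, addRight_apply, slope]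
    field_simp [(sub_pos.2 hpt).ne']
    ring
  obtain ⟨χ₀, hχ₀p, hχ₀A⟩ := exists_eqOn_Iic_eqOn_Ici_of_eq φ A hAp.symm
  obtain ⟨χ, hχt, hχψ⟩ := exists_eqOn_Iic_eqOn_Ici_of_eq χ₀ ψ
    ((hχ₀A (show p ≤ t from hpt.le)).trans hAt)
  exact ⟨χ, fun x hx => (hχt (hx.trans hpt.le)).trans (hχ₀p hx), hχψ⟩

end OrderIso

section Homeomorph

variable {f g : ℝ ≃ₜ ℝ} {A B : Set ℝ}

lemma compactSupp_iff_eventually : CompactSupp g ↔ ∀ᶠ x in cocompact ℝ, g x = x := by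
  have hsupp : {x | g x ≠ x} = Function.support fun x => g x - x := by
    ext x; simp [sub_eq_zero]
  rw [CompactSupp, hsupp, ← tsupport, ← HasCompactSupport, hasCompactSupport_iff_eventuallyEq,
    coclosedCompact_eq_cocompact]
  simp only [EventuallyEq, Pi.zero_apply, sub_eq_zero]

lemma compactSupp_iff_eventually_atBot_atTop :
    CompactSupp g ↔ (∀ᶠ x in atBot, g x = x) ∧ ∀ᶠ x in atTop, g x = x := by
  rw [compactSupp_iff_eventually, cocompact_eq_atBot_atTop, eventually_sup]

lemma CompactSupp.strictMono (hg : CompactSupp g) : StrictMono g := by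
  obtain ⟨x, hx⟩ := eventually_atTop.1 (compactSupp_iff_eventually_atBot_atTop.1 hg).2
  refine (g.continuous.strictMono_of_inj g.injective).resolve_right fun hanti => ?_
  have := hanti (lt_add_one x)
  rw [hx x le_rfl, hx (x + 1) (by linarith)] at this
  linarith

lemma CompactSupp.mul (hf : CompactSupp f) (hg : CompactSupp g) : CompactSupp (f * g) := by
  rw [compactSupp_iff_eventually] at *
  filter_upwards [hf, hg] with x hfx hgx
  rw [Homeomorph.mul_apply, hgx, hfx]

lemma CompactSupp.inv (hg : CompactSupp g) : CompactSupp g⁻¹ := by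
  rw [compactSupp_iff_eventually] at *
  filter_upwards [hg] with x hx
  rw [Homeomorph.inv_apply, g.symm_apply_eq, hx]

lemma CompactSupp.conj (hg : CompactSupp g) (φ : ℝ ≃ₜ ℝ) : CompactSupp (MulAut.conj φ g) := by
  rw [compactSupp_iff_eventually] at *
  filter_upwards [Tendsto.eventually (f := φ.symm) φ.symm.map_cocompact.le hg] with x hx
  simp [hx]

lemma FixesNbhd.mono (hg : FixesNbhd g A) (hBA : B ⊆ A) : FixesNbhd g B :=
  let ⟨U, hU, hAU, hfix⟩ := hg
  ⟨U, hU, hBA.trans hAU, hfix⟩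

lemma FixesNbhd.mul (hf : FixesNbhd f A) (hg : FixesNbhd g A) : FixesNbhd (f * g) A :=
  let ⟨U, hU, hAU, hfU⟩ := hf
  let ⟨V, hV, hAV, hgV⟩ := hg
  ⟨U ∩ V, hU.inter hV, subset_inter hAU hAV, fun x hx => by
    rw [Homeomorph.mul_apply, hgV x hx.2, hfU x hx.1]⟩

lemma FixesNbhd.inv (hg : FixesNbhd g A) : FixesNbhd g⁻¹ A :=
  let ⟨U, hU, hAU, hgU⟩ := hg
  ⟨U, hU, hAU, fun x hx => by rw [Homeomorph.inv_apply, g.symm_apply_eq, hgU x hx]⟩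

lemma FixesNbhd.conj (hg : FixesNbhd g A) (φ : ℝ ≃ₜ ℝ) : FixesNbhd (MulAut.conj φ g) (φ '' A) :=
  let ⟨U, hU, hAU, hgU⟩ := hg
  ⟨φ '' U, φ.isOpenMap U hU, image_mono hAU, by
    rintro _ ⟨x, hx, rfl⟩
    simp [hgU x hx]⟩

/-- The group `G_A`. -/
def fixingNbhdSubgroup (A : Set ℝ) : Subgroup (ℝ ≃ₜ ℝ) where
  carrier := {g | CompactSupp g ∧ FixesNbhd g A}
  one_mem' := ⟨compactSupp_iff_eventually.2 (.of_forall fun _ => rfl),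
    univ, isOpen_univ, subset_univ A, fun _ _ => rfl⟩
  mul_mem' hf hg := ⟨hf.1.mul hg.1, hf.2.mul hg.2⟩
  inv_mem' hg := ⟨hg.1.inv, hg.2.inv⟩

lemma fixingNbhdSubgroup_anti (hBA : B ⊆ A) : fixingNbhdSubgroup A ≤ fixingNbhdSubgroup B :=
  fun _ hg => ⟨hg.1, hg.2.mono hBA⟩

lemma conj_mem_fixingNbhdSubgroup (hg : g ∈ fixingNbhdSubgroup A) (φ : ℝ ≃ₜ ℝ) :
    MulAut.conj φ g ∈ fixingNbhdSubgroup (φ '' A) :=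
  ⟨hg.1.conj φ, hg.2.conj φ⟩

end Homeomorph

/-- `g ∈ G_I G_J G_I`. -/
def HasFragmentation (I J : Set ℝ) (g : ℝ ≃ₜ ℝ) : Prop :=
  ∃ g₁ ∈ fixingNbhdSubgroup I, ∃ g₂ ∈ fixingNbhdSubgroup J, ∃ g₃ ∈ fixingNbhdSubgroup I,
    g = g₁ * g₂ * g₃

section Fragmentation

variable {g : ℝ ≃ₜ ℝ} {I J I' J' : Set ℝ}

lemma HasFragmentation.mono (hg : HasFragmentation I J g) (hI : I' ⊆ I) (hJ : J' ⊆ J) :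
    HasFragmentation I' J' g :=
  let ⟨g₁, h₁, g₂, h₂, g₃, h₃, he⟩ := hg
  ⟨g₁, fixingNbhdSubgroup_anti hI h₁, g₂, fixingNbhdSubgroup_anti hJ h₂,
    g₃, fixingNbhdSubgroup_anti hI h₃, he⟩

lemma HasFragmentation.conj (hg : HasFragmentation I J g) (φ : ℝ ≃ₜ ℝ) :
    HasFragmentation (φ '' I) (φ '' J) (MulAut.conj φ g) :=
  let ⟨g₁, h₁, g₂, h₂, g₃, h₃, he⟩ := hg
  ⟨_, conj_mem_fixingNbhdSubgroup h₁ φ, _, conj_mem_fixingNbhdSubgroup h₂ φ,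
    _, conj_mem_fixingNbhdSubgroup h₃ φ, by rw [he, map_mul, map_mul]⟩

lemma exists_mul_eq_of_apply_lt {b c : ℝ} (hbc : b < c) (hg : CompactSupp g) (hgb : g b < c) :
    ∃ k ∈ fixingNbhdSubgroup (Ici c), ∃ h ∈ fixingNbhdSubgroup (Iic b), k * h = g := by
  obtain ⟨s, hs, hsc⟩ := exists_between (max_lt hbc hgb)
  set t := g.symm s
  have hgt : g t = s := g.apply_symm_apply s
  have hbt : b < t := hg.strictMono.lt_iff_lt.1 (hgt ▸ (le_max_right _ _).trans_lt hs)
  obtain ⟨p, hbp, hp⟩ := exists_between (lt_min hbt ((le_max_left _ _).trans_lt hs))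
  let G := hg.strictMono.orderIsoOfSurjective g g.surjective
  obtain ⟨χ, hχp, hχt⟩ := OrderIso.exists_eqOn_Iic_eqOn_Ici_of_lt (OrderIso.refl ℝ) G
    (hp.trans_le (min_le_left _ _)) (hgt ▸ hp.trans_le (min_le_right _ _))
  let h := χ.toHomeomorph
  have hh : h ∈ fixingNbhdSubgroup (Iic b) := by
    refine ⟨compactSupp_iff_eventually_atBot_atTop.2 ⟨?_, ?_⟩,
      Iio p, isOpen_Iio, Iic_subset_Iio.2 hbp, fun x (hx : x < p) => hχp hx.le⟩
    · filter_upwards [eventually_le_atBot p] with x hx using hχp hx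
    · filter_upwards [eventually_ge_atTop t, (compactSupp_iff_eventually_atBot_atTop.1 hg).2]
        with x hx hgx using (hχt hx).trans hgx
  have hk : FixesNbhd (g * h⁻¹) (Ici c) := by
    refine ⟨Ioi s, isOpen_Ioi, Ici_subset_Ioi.2 hsc, fun y (hy : s < y) => ?_⟩
    have hhy : h (g.symm y) = y :=
      (hχt (hg.inv.strictMono hy).le).trans (g.apply_symm_apply y)
    rw [Homeomorph.mul_apply, Homeomorph.inv_apply, h.symm_apply_eq.2 hhy.symm,
      g.apply_symm_apply]
  exact ⟨g * h⁻¹, ⟨hg.mul hh.1.inv, hk⟩, h, hh, inv_mul_cancel_right g h⟩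

lemma hasFragmentation_Iic_Ici {b c : ℝ} (hbc : b < c) (hg : CompactSupp g) :
    HasFragmentation (Iic b) (Ici c) g := by
  by_cases hgb : g b < c
  · obtain ⟨k, hk, h, hh, rfl⟩ := exists_mul_eq_of_apply_lt hbc hg hgb
    exact ⟨1, one_mem _, k, hk, h, hh, (one_mul _).symm⟩
  · -- `g` moves `b` to the right, so `g⁻¹` moves it to the left
    have hginv : g⁻¹ b < c := by
      refine lt_trans ?_ hbc
      rw [← hg.strictMono.lt_iff_lt, Homeomorph.inv_apply, g.apply_symm_apply]
      exact hbc.trans_le (not_lt.1 hgb)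
    obtain ⟨k, hk, h, hh, he⟩ := exists_mul_eq_of_apply_lt hbc hg.inv hginv
    exact ⟨h⁻¹, inv_mem hh, k⁻¹, inv_mem hk, 1, one_mem _,
      by rw [mul_one, ← mul_inv_rev, he, inv_inv]⟩

end Fragmentation

/-- Fragmentation: if `I = [a,b]` and `J = [c,d]` are disjoint compact intervals with
non-empty interior, any compactly supported homeomorphism `g` of `ℝ` can be written
`g = g₁ g₂ g₃` with `g₁, g₃` compactly supported and fixing a neighbourhood of `I`, and
`g₂` compactly supported and fixing a neighbourhood of `J`. -/
theorem stmt5 (a b c d : ℝ) (hab : a < b) (hcd : c < d)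
    (hdisj : Disjoint (Set.Icc a b) (Set.Icc c d))
    (g : ℝ ≃ₜ ℝ) (hg : CompactSupp g) :
    ∃ g1 g2 g3 : ℝ ≃ₜ ℝ, CompactSupp g1 ∧ CompactSupp g2 ∧ CompactSupp g3 ∧
      FixesNbhd g1 (Set.Icc a b) ∧ FixesNbhd g2 (Set.Icc c d) ∧
      FixesNbhd g3 (Set.Icc a b) ∧ ∀ x : ℝ, g x = g1 (g2 (g3 x)) := by
  suffices HasFragmentation (Icc a b) (Icc c d) g by
    obtain ⟨g₁, h₁, g₂, h₂, g₃, h₃, rfl⟩ := this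
    exact ⟨g₁, g₂, g₃, h₁.1, h₂.1, h₃.1, h₁.2, h₂.2, h₃.2, fun _ => rfl⟩
  rcases lt_or_lt_of_disjoint_Icc hab.le hcd.le hdisj with hbc | hda
  · exact (hasFragmentation_Iic_Ici hbc hg).mono Icc_subset_Iic_self Icc_subset_Ici_self
  · -- reflect by `x ↦ -x` to put `I` to the left of `J`
    let σ := Homeomorph.neg ℝ
    have hσ : MulAut.conj σ (MulAut.conj σ g) = g := by ext; simp [σ]
    have := (hasFragmentation_Iic_Ici (neg_lt_neg hda) (hg.conj σ)).conj σ
    simp only [hσ, Homeomorph.coe_neg, image_neg_eq_neg, neg_Iic, neg_Ici, neg_neg, σ] at this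
    exact this.mono Icc_subset_Ici_self Icc_subset_Iic_self
end
end

section
/- Let $\psi : \mathrm{Homeo}_c(\mathbb{R}) \to \mathrm{Homeo}(\mathbb{R})$ be a continuous group morphism whose image has no global fixed point. Then there exists a homeomorphism $h$ of $\mathbb{R}$ such that for every compactly supported homeomorphism $f$, $\psi(f) = h \circ f \circ h^{-1}$. -/
noncomputable section

instance instGroupHomeomorph (X : Type) [TopologicalSpace X] : Group (X ≃ₜ X) where
  mul f g := g.trans f
  one := Homeomorph.refl X
  inv := Homeomorph.symm
  mul_assoc a b c := Homeomorph.ext fun _ => rfl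
  one_mul a := Homeomorph.ext fun _ => rfl
  mul_one a := Homeomorph.ext fun _ => rfl
  inv_mul_cancel a := Homeomorph.ext fun x => a.symm_apply_apply x

@[simp] theorem homeo_mul_apply {X : Type} [TopologicalSpace X] (f g : X ≃ₜ X) (x : X) :
    (f * g) x = f (g x) := rfl

/-- The compact-open type topology on the group of homeomorphisms. -/
instance instTopHomeomorph (X Y : Type) [TopologicalSpace X] [TopologicalSpace Y] :
    TopologicalSpace (X ≃ₜ Y) :=
  TopologicalSpace.induced
    (fun f => ((⟨f, f.continuous⟩ : C(X, Y)), (⟨f.symm, f.symm.continuous⟩ : C(Y, X))))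
    inferInstance

/-- The group `Homeo_c(ℝ)` of compactly supported homeomorphisms of the real line,
as a subgroup of the group of homeomorphisms of `ℝ`. -/
def HomeoC : Subgroup (ℝ ≃ₜ ℝ) where
  carrier := {f | ∃ C : Set ℝ, IsCompact C ∧ ∀ x ∉ C, f x = x}
  one_mem' := ⟨∅, isCompact_empty, fun _ _ => rfl⟩
  mul_mem' := by
    rintro a b ⟨C, hC, ha⟩ ⟨D, hD, hb⟩
    refine ⟨C ∪ D, hC.union hD, fun x hx => ?_⟩
    have hxC : x ∉ C := fun h => hx (Or.inl h)
    have hxD : x ∉ D := fun h => hx (Or.inr h)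
    show a (b x) = x
    rw [hb x hxD, ha x hxC]
  inv_mem' := by
    rintro a ⟨C, hC, ha⟩
    exact ⟨C, hC, fun x hx => a.symm_apply_eq.mpr (ha x hx).symm⟩

/-!
Elements of `Homeo_c(ℝ)` are increasing and can be joined by straight segments `(1 - t) f + t g`,
so the whole group, the stabilizer `S` of `0` and the subgroups `G₊`, `G₋` of homeomorphisms
supported in `(0, ∞)`, `(-∞, 0)` are connected. Hence every `ψ f` is increasing, and an orbit of
a connected subgroup is an interval whose endpoints, if it is not all of `ℝ`, are fixed by the
whole subgroup.

`G₋` commutes with `G₊` and is perfect: by an infinite swindle every element of `G₋` is a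
commutator. If `ψ(G₊)` acted transitively, `ψ(G₋)` would act freely, hence be abelian by
Hölder's theorem, hence trivial; but every element of `Homeo_c(ℝ)` is conjugate into `G₋` and
`ψ` is not trivial. So `ψ(G₊)` has fixed points, `ψ(G₋)` has a fixed point among them, and `S`,
which normalizes `G₊` and `G₋`, fixes a point `q` of this closed set. As `S` is a maximal
subgroup and `ψ` has no global fixed point, the stabilizer of `q` is exactly `S`, so
`g 0 ↦ ψ g q` is a well defined equivariant bijection `h` of `ℝ`. Connectedness of
`{g | 0 < g 0}` makes `h` monotone, so `h` is a homeomorphism, and equivariance reads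
`ψ f = h f h⁻¹`.
-/

open Set Function Filter Topology unitInterval
open scoped commutatorElement

lemma IsPreconnected.apply_lt_of_forall_ne {X : Type*} [TopologicalSpace X] {s : Set X}
    (hs : IsPreconnected s) {f g : X → ℝ} (hf : ContinuousOn f s) (hg : ContinuousOn g s)
    (hne : ∀ x ∈ s, f x ≠ g x) {a b : X} (ha : a ∈ s) (hb : b ∈ s) (hab : f a < g a) :
    f b < g b :=
  not_le.mp fun hba =>
    let ⟨x, hx, hfgx⟩ := hs.intermediate_value₂ ha hb hf hg hab.le hba
    hne x hx hfgx

lemma Subgroup.commutatorElement_mem {G : Type*} [Group G] (H : Subgroup G) {a b : G} (ha : a ∈ H)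
    (hb : b ∈ H) : ⁅a, b⁆ ∈ H := by
  rw [commutatorElement_def]
  exact H.mul_mem (H.mul_mem (H.mul_mem ha hb) (H.inv_mem ha)) (H.inv_mem hb)

namespace HomeoReal

lemma coe_pow (f : ℝ ≃ₜ ℝ) (n : ℕ) : ⇑(f ^ n) = (⇑f)^[n] := by
  induction n with
  | zero => rfl
  | succ n ih => rw [pow_succ', iterate_succ', ← ih]; rfl

def ofStrictMono (F : ℝ → ℝ) (hm : StrictMono F) (hs : Surjective F) : ℝ ≃ₜ ℝ :=
  (hm.orderIsoOfSurjective F hs).toHomeomorph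

def SupportedIn (f : ℝ ≃ₜ ℝ) (U : Set ℝ) : Prop :=
  ∃ K : Set ℝ, IsCompact K ∧ K ⊆ U ∧ ∀ x ∉ K, f x = x

namespace SupportedIn

variable {f g : ℝ ≃ₜ ℝ} {U V : Set ℝ}

lemma mono (hf : SupportedIn f U) (h : U ⊆ V) : SupportedIn f V :=
  let ⟨K, hK, hKU, hfK⟩ := hf; ⟨K, hK, hKU.trans h, hfK⟩

lemma one (U : Set ℝ) : SupportedIn 1 U := ⟨∅, isCompact_empty, empty_subset U, fun _ _ => rfl⟩

lemma mul (hf : SupportedIn f U) (hg : SupportedIn g U) : SupportedIn (f * g) U := by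
  obtain ⟨K, hK, hKU, hfK⟩ := hf
  obtain ⟨L, hL, hLU, hgL⟩ := hg
  refine ⟨K ∪ L, hK.union hL, union_subset hKU hLU, fun x hx => ?_⟩
  rw [mem_union, not_or] at hx
  simp only [homeo_mul_apply, hgL x hx.2, hfK x hx.1]

lemma inv (hf : SupportedIn f U) : SupportedIn f⁻¹ U :=
  let ⟨K, hK, hKU, hfK⟩ := hf
  ⟨K, hK, hKU, fun x hx => f.symm_apply_eq.mpr (hfK x hx).symm⟩

lemma conj (hf : SupportedIn f U) (k : ℝ ≃ₜ ℝ) : SupportedIn (k * f * k⁻¹) (k '' U) := by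
  obtain ⟨K, hK, hKU, hfK⟩ := hf
  refine ⟨k '' K, hK.image k.continuous, image_mono hKU, fun x hx => ?_⟩
  have hx' : k.symm x ∉ K := fun h => hx ⟨_, h, k.apply_symm_apply x⟩
  change k (f (k.symm x)) = x
  rw [hfK _ hx', k.apply_symm_apply]

lemma mem_homeoC (hf : SupportedIn f U) : f ∈ HomeoC :=
  let ⟨K, hK, _, hfK⟩ := hf; ⟨K, hK, hfK⟩

lemma apply_eq_of_not_mem (hf : SupportedIn f U) {x : ℝ} (hx : x ∉ U) : f x = x :=
  let ⟨_, _, hKU, hfK⟩ := hf; hfK x fun h => hx (hKU h)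

end SupportedIn

lemma strictMono_of_mem_homeoC {f : ℝ ≃ₜ ℝ} (hf : f ∈ HomeoC) : StrictMono f := by
  obtain ⟨K, hK, hfK⟩ := hf
  obtain ⟨b, hb⟩ := hK.bddAbove
  have hfix : ∀ x, b < x → f x = x := fun x hx => hfK x fun h => (hb h).not_gt hx
  refine (f.continuous.strictMono_of_inj f.injective).resolve_right fun hanti => ?_
  have := hanti (lt_add_one (b + 1))
  rw [hfix _ (by linarith), hfix _ (by linarith)] at this
  linarith

lemma SupportedIn.strictMono {f : ℝ ≃ₜ ℝ} {U : Set ℝ} (hf : SupportedIn f U) : StrictMono f :=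
  strictMono_of_mem_homeoC hf.mem_homeoC

lemma mapsTo_of_eq_outside {f : ℝ ≃ₜ ℝ} {K : Set ℝ} (hfK : ∀ x ∉ K, f x = x) : MapsTo f K K :=
  fun x hx => by_contra fun h => h (by rwa [f.injective (hfK _ h)])

lemma commute_of_disjoint {f g : ℝ ≃ₜ ℝ} {U V : Set ℝ} (hf : SupportedIn f U)
    (hg : SupportedIn g V) (hUV : Disjoint U V) : Commute f g := by
  obtain ⟨K, -, hKU, hfK⟩ := hf
  obtain ⟨L, -, hLV, hgL⟩ := hg
  have hKL : ∀ x ∈ K, x ∉ L := fun x hxK hxL => (hUV.mono hKU hLV).ne_of_mem hxK hxL rfl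
  ext x
  change f (g x) = g (f x)
  by_cases hxK : x ∈ K
  · rw [hgL x (hKL x hxK), hgL _ (hKL _ (mapsTo_of_eq_outside hfK hxK))]
  by_cases hxL : x ∈ L
  · rw [hfK x hxK, hfK _ fun h => hKL _ h (mapsTo_of_eq_outside hgL hxL)]
  · rw [hfK x hxK, hgL x hxL, hfK x hxK]

lemma surjective_of_eq_outside {F : ℝ → ℝ} (hF : Continuous F) {K : Set ℝ} (hK : IsCompact K)
    (hFK : ∀ x ∉ K, F x = x) : Surjective F := by
  have hid : id =ᶠ[Filter.cocompact ℝ] F :=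
    Filter.eventually_of_mem hK.compl_mem_cocompact fun x hx => (hFK x hx).symm
  exact hF.surjective (Filter.tendsto_id.congr' (hid.filter_mono atTop_le_cocompact))
    (Filter.tendsto_id.congr' (hid.filter_mono atBot_le_cocompact))

section Bump

def med (a b c : ℝ) : ℝ := max (min a b) (min (max a b) c)

lemma med_eq_right_of_mul_nonpos {a b c : ℝ} (h : (a - c) * (b - c) ≤ 0) : med a b c = c := by
  simp only [med, max_def, min_def]
  split_ifs <;> nlinarith

lemma med_self_left (a c : ℝ) : med a a c = a := by simp [med]

lemma strictMono_med {f g : ℝ → ℝ} (hf : StrictMono f) (hg : StrictMono g) :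
    StrictMono fun x => med (f x) (g x) x := fun a b h => by
  have := hf h; have := hg h
  simp only [med, max_def, min_def]
  split_ifs <;> linarith

variable {s t u v : ℝ}

/-- The median of the identity and of the lines through `(s, s), (u, v)` and `(u, v), (t, t)`:
for `s < u, v < t` this is the piecewise linear homeomorphism which is the identity outside
`(s, t)` and sends `u` to `v`. -/
def bumpFun (s t u v x : ℝ) : ℝ :=
  med (s + (v - s) / (u - s) * (x - s)) (t + (t - v) / (t - u) * (x - t)) x

lemma bumpFun_of_not_mem (hsu : s < u) (hut : u < t) {x : ℝ} (hx : x ∉ Ioo s t) :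
    bumpFun s t u v x = x := by
  apply med_eq_right_of_mul_nonpos
  have hxst : 0 ≤ (x - s) * (x - t) := by
    rw [mem_Ioo, not_and_or, not_lt, not_lt] at hx
    rcases hx with hx | hx <;> nlinarith
  have key : (s + (v - s) / (u - s) * (x - s) - x) * (t + (t - v) / (t - u) * (x - t) - x)
      = -((x - s) * (x - t) * (v - u) ^ 2) / ((u - s) * (t - u)) := by
    field_simp [(sub_pos.2 hsu).ne', (sub_pos.2 hut).ne']
    ring
  rw [key]
  exact div_nonpos_of_nonpos_of_nonneg (by nlinarith [sq_nonneg (v - u)])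
    (mul_pos (sub_pos.2 hsu) (sub_pos.2 hut)).le

lemma bumpFun_self (hsu : s < u) (hut : u < t) : bumpFun s t u v u = v := by
  have h1 : s + (v - s) / (u - s) * (u - s) = v := by field_simp [(sub_pos.2 hsu).ne']; ring
  have h2 : t + (t - v) / (t - u) * (u - t) = v := by field_simp [(sub_pos.2 hut).ne']; ring
  rw [bumpFun, h1, h2, med_self_left]

lemma strictMono_bumpFun (hsu : s < u) (hut : u < t) (hsv : s < v) (hvt : v < t) :
    StrictMono (bumpFun s t u v) := by
  have hA : 0 < (v - s) / (u - s) := div_pos (by linarith) (by linarith)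
  have hB : 0 < (t - v) / (t - u) := div_pos (by linarith) (by linarith)
  exact strictMono_med (fun a b h => by gcongr) (fun a b h => by gcongr)

lemma continuous_bumpFun : Continuous (bumpFun s t u v) := by
  unfold bumpFun med
  fun_prop

def bump (hsu : s < u) (hut : u < t) (hsv : s < v) (hvt : v < t) : ℝ ≃ₜ ℝ :=
  ofStrictMono (bumpFun s t u v) (strictMono_bumpFun hsu hut hsv hvt)
    (surjective_of_eq_outside continuous_bumpFun (isCompact_Icc (a := s) (b := t))
      fun _ hx => bumpFun_of_not_mem hsu hut fun h => hx (Ioo_subset_Icc_self h))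

variable (hsu : s < u) (hut : u < t) (hsv : s < v) (hvt : v < t)

lemma bump_apply (x : ℝ) : bump hsu hut hsv hvt x = bumpFun s t u v x := rfl

lemma bump_apply_self : bump hsu hut hsv hvt u = v := bumpFun_self hsu hut

lemma bump_apply_of_not_mem {x : ℝ} (hx : x ∉ Ioo s t) : bump hsu hut hsv hvt x = x :=
  bumpFun_of_not_mem hsu hut hx

lemma supportedIn_bump : SupportedIn (bump hsu hut hsv hvt) (Icc s t) :=
  ⟨Icc s t, isCompact_Icc, subset_rfl, fun _ hx =>
    bump_apply_of_not_mem hsu hut hsv hvt fun h => hx (Ioo_subset_Icc_self h)⟩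

lemma strictMono_bump : StrictMono (bump hsu hut hsv hvt) := strictMono_bumpFun hsu hut hsv hvt

end Bump

lemma continuous_apply (x : ℝ) : Continuous fun f : ℝ ≃ₜ ℝ => f x := by
  have h : Continuous fun f : ℝ ≃ₜ ℝ =>
      ((⟨f, f.continuous⟩ : C(ℝ, ℝ)), (⟨f.symm, f.symm.continuous⟩ : C(ℝ, ℝ))) :=
    continuous_induced_dom
  exact (continuous_eval_const (F := C(ℝ, ℝ)) x).comp (continuous_fst.comp h)

/-- For increasing homeomorphisms, joint continuity of `(t, x) ↦ e t x` forces joint continuity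
of the inverses, hence continuity of `e` for the compact-open topology. -/
lemma continuous_of_continuous_uncurry {X : Type*} [TopologicalSpace X] {e : X → ℝ ≃ₜ ℝ}
    (he : Continuous fun p : X × ℝ => e p.1 p.2) (hmono : ∀ t, StrictMono (e t)) :
    Continuous e := by
  have hinv : Continuous fun p : X × ℝ => (e p.1).symm p.2 := by
    refine continuous_iff_continuousAt.2 fun p₀ =>
      tendsto_order.2 ⟨fun a ha => ?_, fun b hb => ?_⟩
    · have hopen : IsOpen {p : X × ℝ | e p.1 a < p.2} :=
        isOpen_lt (he.comp (continuous_fst.prodMk continuous_const)) continuous_snd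
      have hmem : e p₀.1 a < p₀.2 := by
        simpa using hmono p₀.1 ha
      filter_upwards [hopen.mem_nhds hmem] with p hp
      exact (hmono p.1).lt_iff_lt.mp (by rwa [Homeomorph.apply_symm_apply])
    · have hopen : IsOpen {p : X × ℝ | p.2 < e p.1 b} :=
        isOpen_lt continuous_snd (he.comp (continuous_fst.prodMk continuous_const))
      have hmem : p₀.2 < e p₀.1 b := by
        simpa using hmono p₀.1 hb
      filter_upwards [hopen.mem_nhds hmem] with p hp
      exact (hmono p.1).lt_iff_lt.mp (by rwa [Homeomorph.apply_symm_apply])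
  exact continuous_induced_rng.2 <| Continuous.prodMk
    (ContinuousMap.continuous_of_continuous_uncurry _ he)
    (ContinuousMap.continuous_of_continuous_uncurry _ hinv)

/-! ### Hölder's theorem -/

lemma exists_pow_apply_gt {a : ℝ ≃ₜ ℝ} (ha : ∀ x, x < a x) (x c : ℝ) :
    ∃ n : ℕ, c < (a ^ n) x := by
  by_contra! h
  have hmono : Monotone fun n => (⇑a)^[n] x :=
    monotone_nat_of_le_succ fun n => by rw [iterate_succ_apply']; exact (ha _).le
  have hlim := tendsto_atTop_ciSup hmono ⟨c, by rintro _ ⟨n, rfl⟩; simpa [coe_pow] using h n⟩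
  exact (ha _).ne' (isFixedPt_of_tendsto_iterate hlim a.continuous.continuousAt)

lemma strictMono_zpow_apply {a : ℝ ≃ₜ ℝ} (ha : ∀ x, x < a x) (x : ℝ) :
    StrictMono fun m : ℤ => (a ^ m) x :=
  strictMono_int_of_lt_succ fun m => by rw [add_comm, zpow_one_add, homeo_mul_apply]; exact ha _

structure IsFreeIncreasing (Γ : Subgroup (ℝ ≃ₜ ℝ)) : Prop where
  strictMono : ∀ a ∈ Γ, StrictMono a
  eq_one_of_apply_eq : ∀ a ∈ Γ, ∀ x, a x = x → a = 1

namespace IsFreeIncreasing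

variable {Γ : Subgroup (ℝ ≃ₜ ℝ)} {a b g : ℝ ≃ₜ ℝ}

lemma forall_lt_or_eq_one_or_forall_gt (hΓ : IsFreeIncreasing Γ) (ha : a ∈ Γ) :
    (∀ x, x < a x) ∨ a = 1 ∨ ∀ x, a x < x := by
  by_cases hfix : ∃ x, a x = x
  · obtain ⟨x, hx⟩ := hfix
    exact Or.inr (Or.inl (hΓ.eq_one_of_apply_eq a ha x hx))
  push Not at hfix
  rcases (hfix 0).lt_or_gt with h | h
  · exact Or.inr (Or.inr fun x => isPreconnected_univ.apply_lt_of_forall_ne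
      a.continuous.continuousOn continuousOn_id (fun x _ => hfix x) (mem_univ 0) (mem_univ x) h)
  · exact Or.inl fun x => isPreconnected_univ.apply_lt_of_forall_ne continuousOn_id
      a.continuous.continuousOn (fun x _ => (hfix x).symm) (mem_univ 0) (mem_univ x) h

lemma forall_lt_or_eq_or_forall_gt (hΓ : IsFreeIncreasing Γ) (ha : a ∈ Γ) (hb : b ∈ Γ) :
    (∀ x, a x < b x) ∨ a = b ∨ ∀ x, b x < a x := by
  have hab : b = a * (a⁻¹ * b) := by group
  rcases hΓ.forall_lt_or_eq_one_or_forall_gt (Γ.mul_mem (Γ.inv_mem ha) hb) with h | h | h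
  · exact Or.inl fun x => by rw [hab, homeo_mul_apply]; exact hΓ.strictMono a ha (h x)
  · exact Or.inr (Or.inl (by rw [hab, h, mul_one]))
  · exact Or.inr (Or.inr fun x => by rw [hab, homeo_mul_apply]; exact hΓ.strictMono a ha (h x))

lemma forall_lt_of_apply_lt (hΓ : IsFreeIncreasing Γ) (ha : a ∈ Γ) (hb : b ∈ Γ) {x₀ : ℝ}
    (h : a x₀ < b x₀) : ∀ x, a x < b x := by
  rcases hΓ.forall_lt_or_eq_or_forall_gt ha hb with h' | rfl | h'
  · exact h'
  · exact absurd h (lt_irrefl _)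
  · exact absurd h (h' x₀).not_gt

lemma forall_le_of_apply_le (hΓ : IsFreeIncreasing Γ) (ha : a ∈ Γ) (hb : b ∈ Γ) {x₀ : ℝ}
    (h : a x₀ ≤ b x₀) : ∀ x, a x ≤ b x := by
  rcases hΓ.forall_lt_or_eq_or_forall_gt ha hb with h' | rfl | h'
  · exact fun x => (h' x).le
  · exact fun x => le_rfl
  · exact absurd h (h' x₀).not_ge

lemma exists_zpow_le_lt (hΓ : IsFreeIncreasing Γ) (ha : a ∈ Γ) (hpos : ∀ x, x < a x)
    (hg : g ∈ Γ) : ∃ m : ℤ, (∀ x, (a ^ m) x ≤ g x) ∧ ∀ x, g x < (a ^ (m + 1)) x := by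
  have hzpow := strictMono_zpow_apply hpos (0 : ℝ)
  obtain ⟨N, hN⟩ := exists_pow_apply_gt hpos 0 (g 0)
  obtain ⟨n, hn⟩ := exists_pow_apply_gt hpos (g 0) 0
  have hlow : (a ^ (-(n : ℤ))) 0 ≤ g 0 := by
    have := (hΓ.strictMono _ (Γ.zpow_mem ha (-(n : ℤ)))) hn
    rw [← homeo_mul_apply, ← zpow_natCast, ← zpow_add, neg_add_cancel, zpow_zero] at this
    exact this.le
  obtain ⟨m, hm, hmax⟩ := Int.exists_greatest_of_bdd (P := fun m : ℤ => (a ^ m) 0 ≤ g 0)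
    ⟨N, fun m hm => by
      by_contra! hNm
      have := hzpow hNm
      simp only [zpow_natCast] at this hm
      linarith⟩ ⟨_, hlow⟩
  refine ⟨m, hΓ.forall_le_of_apply_le (Γ.zpow_mem ha m) hg hm, ?_⟩
  refine hΓ.forall_lt_of_apply_lt hg (Γ.zpow_mem ha (m + 1)) (x₀ := 0) ?_
  by_contra! h
  exact (lt_add_one m).not_ge (hmax _ h)

lemma forall_lt_of_pos (hΓ : IsFreeIncreasing Γ) (ha : a ∈ Γ) (h : 0 < a 0) : ∀ x, x < a x :=
  hΓ.forall_lt_of_apply_lt Γ.one_mem ha h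

lemma eq_zpow_of_isLeast (hΓ : IsFreeIncreasing Γ) (ha : a ∈ Γ) (hpos : 0 < a 0)
    (hmin : ∀ g ∈ Γ, 0 < g 0 → a 0 ≤ g 0) (hg : g ∈ Γ) : ∃ m : ℤ, g = a ^ m := by
  obtain ⟨m, hm, hm1⟩ := hΓ.exists_zpow_le_lt ha (hΓ.forall_lt_of_pos ha hpos) hg
  have hd : (a ^ m)⁻¹ * g ∈ Γ := Γ.mul_mem (Γ.inv_mem (Γ.zpow_mem ha m)) hg
  have hg_eq : g = a ^ m * ((a ^ m)⁻¹ * g) := by group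
  have ham := hΓ.strictMono _ (Γ.zpow_mem ha m)
  have hd0 : 0 ≤ ((a ^ m)⁻¹ * g) 0 := by
    rw [← ham.le_iff_le, ← homeo_mul_apply, ← hg_eq]; exact hm 0
  have hda : ((a ^ m)⁻¹ * g) 0 < a 0 := by
    rw [← ham.lt_iff_lt, ← homeo_mul_apply, ← hg_eq, ← homeo_mul_apply, ← zpow_add_one]
    exact hm1 0
  rcases hd0.eq_or_lt with h | h
  · exact ⟨m, by rw [hg_eq, hΓ.eq_one_of_apply_eq _ hd 0 h.symm, mul_one]⟩
  · exact absurd (hmin _ hd h) hda.not_ge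

lemma exists_mul_self_le (hΓ : IsFreeIncreasing Γ)
    (hnomin : ∀ f ∈ Γ, 0 < f 0 → ∃ g ∈ Γ, 0 < g 0 ∧ g 0 < f 0) {c : ℝ ≃ₜ ℝ} (hc : c ∈ Γ)
    (hcpos : 0 < c 0) : ∃ h ∈ Γ, 0 < h 0 ∧ (h * h) 0 ≤ c 0 := by
  obtain ⟨g, hg, hgpos, hgc⟩ := hnomin c hc hcpos
  by_cases hsq : (g * g) 0 ≤ c 0
  · exact ⟨g, hg, hgpos, hsq⟩
  have hcg := hΓ.forall_lt_of_apply_lt hc (Γ.mul_mem hg hg) (not_le.mp hsq)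
  have hgc' := hΓ.forall_lt_of_apply_lt hg hc hgc
  have hcm := hΓ.strictMono c hc
  have hg' : g (g⁻¹ 0) = 0 := g.apply_symm_apply 0
  refine ⟨c * g⁻¹, Γ.mul_mem hc (Γ.inv_mem hg), ?_, ?_⟩
  · calc (0 : ℝ) = g (g⁻¹ 0) := hg'.symm
      _ < c (g⁻¹ 0) := hgc' _
  · refine hcm.monotone ?_
    rw [← (hΓ.strictMono g hg).le_iff_le]
    change g (g⁻¹ (c (g⁻¹ 0))) ≤ g 0
    rw [show g (g⁻¹ (c (g⁻¹ 0))) = c (g⁻¹ 0) from g.apply_symm_apply _]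
    calc c (g⁻¹ 0) ≤ g (g (g⁻¹ 0)) := (hcg _).le
      _ = g 0 := by rw [hg']

lemma not_pos_commutator (hΓ : IsFreeIncreasing Γ)
    (hnomin : ∀ f ∈ Γ, 0 < f 0 → ∃ g ∈ Γ, 0 < g 0 ∧ g 0 < f 0) (ha : a ∈ Γ) (hb : b ∈ Γ) :
    ¬ 0 < ⁅a, b⁆ 0 := by
  -- `a`, `b` lie between consecutive powers of a small `h > 1`, so `⁅a, b⁆ < h ^ 2 ≤ ⁅a, b⁆`.
  intro hpos
  have hc : ⁅a, b⁆ ∈ Γ := Γ.commutatorElement_mem ha hb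
  obtain ⟨h, hh, hhpos, hsq⟩ := hΓ.exists_mul_self_le hnomin hc hpos
  have hmono : ∀ n : ℤ, StrictMono (h ^ n) := fun n => hΓ.strictMono _ (Γ.zpow_mem hh n)
  obtain ⟨m, ham₁, ham₂⟩ := hΓ.exists_zpow_le_lt hh (hΓ.forall_lt_of_pos hh hhpos) ha
  obtain ⟨k, hbk₁, hbk₂⟩ := hΓ.exists_zpow_le_lt hh (hΓ.forall_lt_of_pos hh hhpos) hb
  have hab : ∀ x, a (b x) < (h ^ (m + k + 2)) x := fun x => calc
    a (b x) < (h ^ (m + 1)) (b x) := ham₂ _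
    _ < (h ^ (m + 1)) ((h ^ (k + 1)) x) := hmono _ (hbk₂ x)
    _ = (h ^ (m + k + 2)) x := by rw [← homeo_mul_apply, ← zpow_add]; ring_nf
  have hba : ∀ x, (h ^ (k + m)) x ≤ b (a x) := fun x => calc
    (h ^ (k + m)) x = (h ^ k) ((h ^ m) x) := by rw [zpow_add]; rfl
    _ ≤ b ((h ^ m) x) := hbk₁ _
    _ ≤ b (a x) := (hΓ.strictMono b hb).monotone (ham₁ x)
  obtain ⟨y, hy⟩ : ∃ y, b (a y) = 0 := ⟨(b * a)⁻¹ 0, (b * a).apply_symm_apply 0⟩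
  have hy' : y ≤ (h ^ (-(k + m))) 0 := calc
    y = (h ^ (-(k + m))) ((h ^ (k + m)) y) := by
      rw [← homeo_mul_apply, ← zpow_add, neg_add_cancel, zpow_zero]; rfl
    _ ≤ (h ^ (-(k + m))) (b (a y)) := (hmono _).monotone (hba y)
    _ = (h ^ (-(k + m))) 0 := by rw [hy]
  have hcy : ⁅a, b⁆ 0 = a (b y) := by
    rw [show ⁅a, b⁆ = a * b * (b * a)⁻¹ by rw [commutatorElement_def]; group]
    change a (b ((b * a).symm 0)) = a (b y)
    rw [(b * a).symm_apply_eq.mpr hy.symm]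
  have := calc ⁅a, b⁆ 0 = a (b y) := hcy
    _ < (h ^ (m + k + 2)) y := hab y
    _ ≤ (h ^ (m + k + 2)) ((h ^ (-(k + m))) 0) := (hmono _).monotone hy'
    _ = (h * h) 0 := by rw [← homeo_mul_apply, ← zpow_add, ← sq, ← zpow_natCast]; ring_nf
  exact this.not_ge hsq

theorem commute (hΓ : IsFreeIncreasing Γ) (ha : a ∈ Γ) (hb : b ∈ Γ) : Commute a b := by
  by_cases hmin : ∃ f ∈ Γ, 0 < f 0 ∧ ∀ g ∈ Γ, 0 < g 0 → f 0 ≤ g 0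
  · obtain ⟨f, hf, hfpos, hfmin⟩ := hmin
    obtain ⟨m, rfl⟩ := hΓ.eq_zpow_of_isLeast hf hfpos hfmin ha
    obtain ⟨k, rfl⟩ := hΓ.eq_zpow_of_isLeast hf hfpos hfmin hb
    exact (Commute.refl f).zpow_zpow m k
  push Not at hmin
  have hc : ⁅a, b⁆ ∈ Γ := Γ.commutatorElement_mem ha hb
  rw [← commutatorElement_eq_one_iff_commute]
  rcases lt_trichotomy (⁅a, b⁆ 0) 0 with h | h | h
  · refine absurd ?_ (hΓ.not_pos_commutator hmin hb ha)
    rw [← commutatorElement_inv, ← (hΓ.strictMono _ hc).lt_iff_lt, ← homeo_mul_apply,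
      mul_inv_cancel]
    exact h
  · exact hΓ.eq_one_of_apply_eq _ hc 0 h
  · exact absurd h (hΓ.not_pos_commutator hmin ha hb)

end IsFreeIncreasing

/-! ### Every homeomorphism supported in an interval is a commutator -/

section Swindle

lemma two_zpow_le_iff_le_log {x : ℝ} (hx : 0 < x) {k : ℤ} :
    (2 : ℝ) ^ k ≤ x ↔ k ≤ Int.log 2 x := by
  simpa using Int.zpow_le_iff_le_log (R := ℝ) (b := 2) one_lt_two (x := k) hx

lemma lt_two_zpow_iff_log_lt {x : ℝ} (hx : 0 < x) {k : ℤ} :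
    x < (2 : ℝ) ^ k ↔ Int.log 2 x < k := by
  simpa using Int.lt_zpow_iff_log_lt (R := ℝ) (b := 2) one_lt_two (x := k) hx

/-- The exponent `k ≤ 0` of the dyadic block `[2 ^ (k - 1), 2 ^ k)` containing `x > 0`, where the
last block is `[1/2, ∞)`. -/
def blockIdx (x : ℝ) : ℤ := min (Int.log 2 x + 1) 0

lemma blockIdx_nonpos (x : ℝ) : blockIdx x ≤ 0 := min_le_right _ _

lemma half_le_div_two_zpow_blockIdx {x : ℝ} (hx : 0 < x) : 1 / 2 ≤ x / 2 ^ blockIdx x := by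
  have h : (2 : ℝ) ^ (blockIdx x - 1) ≤ x :=
    (two_zpow_le_iff_le_log hx).2 (by unfold blockIdx; omega)
  rw [zpow_sub_one₀ two_ne_zero] at h
  rw [le_div_iff₀ (by positivity)]
  linarith

lemma div_two_zpow_blockIdx_lt_one {x : ℝ} (hx : 0 < x) (hk : blockIdx x < 0) :
    x / 2 ^ blockIdx x < 1 := by
  rw [div_lt_one (by positivity), lt_two_zpow_iff_log_lt hx]
  unfold blockIdx at hk ⊢
  omega

lemma blockIdx_two_zpow_mul {k : ℤ} (hk : k ≤ 0) {z : ℝ} (hz : 1 / 2 ≤ z)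
    (hz1 : k < 0 → z < 1) : blockIdx (2 ^ k * z) = k := by
  have hpos : 0 < (2 : ℝ) ^ k * z := by positivity
  have h1 : k - 1 ≤ Int.log 2 (2 ^ k * z) := by
    rw [← two_zpow_le_iff_le_log hpos, zpow_sub_one₀ two_ne_zero]
    nlinarith [zpow_pos (two_pos (α := ℝ)) k]
  unfold blockIdx
  rcases hk.lt_or_eq with hk | rfl
  · have h2 : Int.log 2 (2 ^ k * z) < k := by
      rw [← lt_two_zpow_iff_log_lt hpos]
      nlinarith [zpow_pos (two_pos (α := ℝ)) k, hz1 hk]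
    omega
  · omega

lemma div_two_zpow_blockIdx_lt_one_of_lt_one {x : ℝ} (hx : 0 < x) (hx1 : x < 1) :
    x / 2 ^ blockIdx x < 1 := by
  rcases (blockIdx_nonpos x).lt_or_eq with hk | hk
  · exact div_two_zpow_blockIdx_lt_one hx hk
  · rwa [hk, zpow_zero, div_one]

lemma blockIdx_mono {x y : ℝ} (hx : 0 < x) (hxy : x ≤ y) : blockIdx x ≤ blockIdx y := by
  unfold blockIdx
  have := Int.log_mono_right (b := 2) hx hxy
  omega

/-- The infinite product of the conjugates `x ↦ 2 ^ k * f (x / 2 ^ k)`, `k ≤ 0`, of `f`; when `f`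
is supported in `(1/2, 1)` their supports are disjoint. -/
def swindleFun (f : ℝ ≃ₜ ℝ) (x : ℝ) : ℝ :=
  if 0 < x then 2 ^ blockIdx x * f (x / 2 ^ blockIdx x) else x

def halving : ℝ ≃ₜ ℝ := bump zero_lt_one one_lt_two one_half_pos (by norm_num)

lemma halving_apply_of_mem {x : ℝ} (hx : x ∈ Icc (0 : ℝ) 1) : halving x = x / 2 := by
  obtain ⟨h0, h1⟩ := hx
  simp only [halving, bump_apply, bumpFun, med, max_def, min_def]
  split_ifs <;> linarith

lemma supportedIn_halving : SupportedIn halving (Icc 0 2) := supportedIn_bump _ _ _ _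

variable {f : ℝ ≃ₜ ℝ}

lemma swindleFun_of_nonpos {x : ℝ} (hx : x ≤ 0) : swindleFun f x = x := if_neg hx.not_gt

lemma swindleFun_of_pos {x : ℝ} (hx : 0 < x) :
    swindleFun f x = 2 ^ blockIdx x * f (x / 2 ^ blockIdx x) := if_pos hx

lemma swindleFun_of_half_le {x : ℝ} (hx : 1 / 2 ≤ x) : swindleFun f x = f x := by
  have hk : blockIdx x = 0 := by
    simpa using blockIdx_two_zpow_mul le_rfl hx (fun h => absurd h (lt_irrefl 0))
  rw [swindleFun_of_pos (by linarith), hk, zpow_zero, one_mul, div_one]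

lemma swindleFun_div_two {x : ℝ} (hx : 0 < x) (hx1 : x < 1) :
    swindleFun f (x / 2) = swindleFun f x / 2 := by
  have hx2 : x / 2 = 2 ^ (blockIdx x - 1) * (x / 2 ^ blockIdx x) := by
    rw [zpow_sub_one₀ two_ne_zero]; field_simp
  have hk : blockIdx (x / 2) = blockIdx x - 1 := by
    rw [hx2]
    exact blockIdx_two_zpow_mul (by linarith [blockIdx_nonpos x])
      (half_le_div_two_zpow_blockIdx hx) fun _ => div_two_zpow_blockIdx_lt_one_of_lt_one hx hx1
  have hz : x / 2 / 2 ^ (blockIdx x - 1) = x / 2 ^ blockIdx x := by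
    rw [zpow_sub_one₀ two_ne_zero]; field_simp
  rw [swindleFun_of_pos (by linarith), swindleFun_of_pos hx, hk, hz, zpow_sub_one₀ two_ne_zero]
  ring

variable (hf : SupportedIn f (Ioo (1 / 2) 1))
include hf

lemma half_le_apply_of_half_le {z : ℝ} (hz : 1 / 2 ≤ z) : 1 / 2 ≤ f z := by
  calc (1 / 2 : ℝ) = f (1 / 2) := (hf.apply_eq_of_not_mem (by simp)).symm
    _ ≤ f z := hf.strictMono.monotone hz

lemma apply_lt_one_of_lt_one {z : ℝ} (hz : z < 1) : f z < 1 := by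
  calc f z < f 1 := hf.strictMono hz
    _ = 1 := hf.apply_eq_of_not_mem (by simp)

lemma blockIdx_swindleFun {x : ℝ} (hx : 0 < x) :
    0 < swindleFun f x ∧ blockIdx (swindleFun f x) = blockIdx x := by
  have hz := half_le_apply_of_half_le hf (half_le_div_two_zpow_blockIdx hx)
  rw [swindleFun_of_pos hx]
  exact ⟨by positivity, blockIdx_two_zpow_mul (blockIdx_nonpos x) hz fun hk =>
    apply_lt_one_of_lt_one hf (div_two_zpow_blockIdx_lt_one hx hk)⟩

lemma swindleFun_swindleFun_inv (x : ℝ) : swindleFun f (swindleFun f⁻¹ x) = x := by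
  rcases le_or_gt x 0 with hx | hx
  · rw [swindleFun_of_nonpos hx, swindleFun_of_nonpos hx]
  obtain ⟨hpos, hk⟩ := blockIdx_swindleFun hf.inv hx
  rw [swindleFun_of_pos hpos, hk, swindleFun_of_pos hx, mul_div_cancel_left₀ _ (by positivity)]
  change 2 ^ blockIdx x * f (f.symm _) = x
  rw [f.apply_symm_apply]
  field_simp

lemma strictMono_swindleFun : StrictMono (swindleFun f) := by
  intro a b hab
  rcases le_or_gt b 0 with hb | hb
  · rwa [swindleFun_of_nonpos hb, swindleFun_of_nonpos (hab.le.trans hb)]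
  rcases le_or_gt a 0 with ha | ha
  · rw [swindleFun_of_nonpos ha]
    exact ha.trans_lt (blockIdx_swindleFun hf hb).1
  rcases (blockIdx_mono ha hab.le).lt_or_eq with hk | hk
  · obtain ⟨hpa, hka⟩ := blockIdx_swindleFun hf ha
    obtain ⟨hpb, hkb⟩ := blockIdx_swindleFun hf hb
    have h1 := div_two_zpow_blockIdx_lt_one hpa (hka ▸ hk.trans_le (blockIdx_nonpos b))
    have h2 := half_le_div_two_zpow_blockIdx hpb
    rw [hka, div_lt_one (by positivity)] at h1
    rw [hkb, le_div_iff₀ (by positivity)] at h2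
    have h3 : (2 : ℝ) ^ blockIdx a ≤ 2 ^ blockIdx b * (1 / 2) := by
      rw [one_div, ← zpow_sub_one₀ two_ne_zero]
      exact zpow_le_zpow_right₀ one_le_two (by omega)
    linarith
  · rw [swindleFun_of_pos ha, swindleFun_of_pos hb, hk]
    gcongr
    exact hf.strictMono (by gcongr)

def swindle : ℝ ≃ₜ ℝ :=
  ofStrictMono (swindleFun f) (strictMono_swindleFun hf)
    fun y => ⟨swindleFun f⁻¹ y, swindleFun_swindleFun_inv hf y⟩

lemma swindle_apply (x : ℝ) : swindle hf x = swindleFun f x := rfl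

lemma supportedIn_swindle : SupportedIn (swindle hf) (Icc 0 2) := by
  refine ⟨Icc 0 1, isCompact_Icc, Icc_subset_Icc_right one_le_two, fun x hx => ?_⟩
  rw [mem_Icc, not_and_or, not_le, not_le] at hx
  rcases hx with hx | hx
  · exact swindleFun_of_nonpos hx.le
  · rw [swindle_apply, swindleFun_of_half_le (by linarith)]
    exact hf.apply_eq_of_not_mem fun h => h.2.not_gt hx

/-- Conjugation by the halving map shifts the blocks of `swindle hf` down by one, which removes
its factor `f` on the top block. -/
theorem eq_commutator_swindle : f = ⁅swindle hf, halving⁆ := by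
  set g := halving
  set F := swindle hf
  suffices h : F * g = f * (g * F) by rw [commutatorElement_def, h]; group
  ext x
  change F (g x) = f (g (F x))
  rcases le_or_gt x 0 with hx | hx
  · have hgx : g x = x := bump_apply_of_not_mem _ _ _ _ fun h => hx.not_gt h.1
    rw [hgx, swindle_apply, swindleFun_of_nonpos hx, hgx,
      hf.apply_eq_of_not_mem fun h => hx.not_gt (by linarith [h.1])]
  rcases lt_or_ge x 1 with hx1 | hx1
  · have hFpos : 0 < F x := (blockIdx_swindleFun hf hx).1
    have hF1 : F x < 1 := by
      calc F x < F 1 := (strictMono_swindleFun hf) hx1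
        _ = 1 := by rw [swindle_apply, swindleFun_of_half_le (by norm_num),
          hf.apply_eq_of_not_mem (by simp)]
    rw [halving_apply_of_mem ⟨hx.le, hx1.le⟩, halving_apply_of_mem ⟨hFpos.le, hF1.le⟩,
      swindle_apply, swindleFun_div_two hx hx1,
      hf.apply_eq_of_not_mem fun h => h.1.not_ge (by change F x / 2 ≤ 1 / 2; linarith)]
    rfl
  · have hgx : 1 / 2 ≤ g x := by
      calc (1 / 2 : ℝ) = g 1 := (bump_apply_self _ _ _ _).symm
        _ ≤ g x := (strictMono_bump _ _ _ _).monotone hx1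
    rw [swindle_apply, swindleFun_of_half_le hgx, swindle_apply,
      swindleFun_of_half_le (by linarith), hf.apply_eq_of_not_mem fun h => h.2.not_ge hx1]

end Swindle

lemma SupportedIn.exists_Icc {f : ℝ ≃ₜ ℝ} {a b : ℝ} (hab : a < b)
    (hf : SupportedIn f (Ioo a b)) : ∃ c d, a < c ∧ c ≤ d ∧ d < b ∧ SupportedIn f (Icc c d) := by
  obtain ⟨K, hK, hKab, hfK⟩ := hf
  rcases K.eq_empty_or_nonempty with rfl | hne
  · exact ⟨(a + b) / 2, (a + b) / 2, by linarith, le_rfl, by linarith,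
      ⟨∅, isCompact_empty, empty_subset _, hfK⟩⟩
  exact ⟨sInf K, sSup K, (hKab (hK.sInf_mem hne)).1, csInf_le_csSup hne hK.bddBelow hK.bddAbove,
    (hKab (hK.sSup_mem hne)).2,
    ⟨K, hK, fun x hx => ⟨csInf_le hK.bddBelow hx, le_csSup hK.bddAbove hx⟩, hfK⟩⟩

lemma exists_homeomorph_squeeze {a b c d : ℝ} (hac : a < c) (hcd : c ≤ d) (hdb : d < b) :
    ∃ k : ℝ ≃ₜ ℝ, StrictMono k ∧ a < k 0 ∧ k 2 < b ∧ k (1 / 2) < c ∧ d < k 1 := by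
  set e := (c - a) / 4 with he
  have he0 : 0 < e := by rw [he]; linarith
  have hA : StrictMono fun x => e * x + (a + e) := fun x y hxy =>
    add_lt_add_left (mul_lt_mul_of_pos_left hxy he0) _
  let A : ℝ ≃ₜ ℝ := ofStrictMono _ hA fun y => ⟨(y - (a + e)) / e, by field_simp; ring⟩
  have hsu : a + 3 / 2 * e < a + 2 * e := by linarith
  have hut : a + 2 * e < (d + 3 * b) / 4 := by linarith
  have hsv : a + 3 / 2 * e < (d + b) / 2 := by linarith
  have hvt : (d + b) / 2 < (d + 3 * b) / 4 := by linarith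
  set P := bump hsu hut hsv hvt
  have hP : ∀ x ≤ a + 3 / 2 * e, P x = x := fun x hx =>
    bump_apply_of_not_mem _ _ _ _ fun h => h.1.not_ge hx
  have hPt : P ((d + 3 * b) / 4) = (d + 3 * b) / 4 :=
    bump_apply_of_not_mem _ _ _ _ fun h => h.2.ne rfl
  refine ⟨P * A, (strictMono_bump hsu hut hsv hvt).comp hA, ?_, ?_, ?_, ?_⟩
  · change a < P (e * 0 + (a + e))
    rw [hP _ (by linarith)]
    linarith
  · change P (e * 2 + (a + e)) < b
    calc P (e * 2 + (a + e)) < P ((d + 3 * b) / 4) :=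
        strictMono_bump hsu hut hsv hvt (by linarith)
      _ < b := by rw [hPt]; linarith
  · change P (e * (1 / 2) + (a + e)) < c
    rw [hP _ (by linarith)]
    linarith
  · change d < P (e * 1 + (a + e))
    rw [show e * 1 + (a + e) = a + 2 * e by ring, bump_apply_self]
    linarith

theorem SupportedIn.exists_eq_commutator {f : ℝ ≃ₜ ℝ} {a b : ℝ} (hab : a < b)
    (hf : SupportedIn f (Ioo a b)) :
    ∃ u v, SupportedIn u (Ioo a b) ∧ SupportedIn v (Ioo a b) ∧ f = ⁅u, v⁆ := by
  obtain ⟨c, d, hac, hcd, hdb, hfcd⟩ := hf.exists_Icc hab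
  obtain ⟨k, hk, hk0, hk2, hkc, hkd⟩ := exists_homeomorph_squeeze hac hcd hdb
  have hf' : SupportedIn (k⁻¹ * f * k) (Ioo (1 / 2) 1) := by
    have := hfcd.conj k⁻¹
    rw [inv_inv] at this
    refine this.mono ?_
    rintro _ ⟨y, hy, rfl⟩
    have hky : k (k⁻¹ y) = y := k.apply_symm_apply y
    exact ⟨hk.lt_iff_lt.mp (by rw [hky]; linarith [hy.1]),
      hk.lt_iff_lt.mp (by rw [hky]; linarith [hy.2])⟩
  have himg : k '' Icc 0 2 ⊆ Ioo a b := by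
    rintro _ ⟨x, hx, rfl⟩
    exact ⟨hk0.trans_le (hk.monotone hx.1), (hk.monotone hx.2).trans_lt hk2⟩
  refine ⟨k * swindle hf' * k⁻¹, k * halving * k⁻¹,
    ((supportedIn_swindle hf').conj k).mono himg, (supportedIn_halving.conj k).mono himg, ?_⟩
  calc f = k * (k⁻¹ * f * k) * k⁻¹ := by group
    _ = k * ⁅swindle hf', halving⁆ * k⁻¹ := by rw [← eq_commutator_swindle hf']
    _ = _ := by simp only [commutatorElement_def]; group

lemma SupportedIn.exists_Ioo_of_Ioi {f : ℝ ≃ₜ ℝ} {a : ℝ} (hf : SupportedIn f (Ioi a)) :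
    ∃ b, a < b ∧ SupportedIn f (Ioo a b) := by
  obtain ⟨K, hK, hKU, hfK⟩ := hf
  obtain ⟨M, hM⟩ := hK.bddAbove
  refine ⟨max M a + 1, by linarith [le_max_right M a], K, hK, fun x hx => ⟨hKU hx, ?_⟩, hfK⟩
  linarith [hM hx, le_max_left M a]

lemma SupportedIn.exists_Ioo_of_Iio {f : ℝ ≃ₜ ℝ} {b : ℝ} (hf : SupportedIn f (Iio b)) :
    ∃ a, a < b ∧ SupportedIn f (Ioo a b) := by
  obtain ⟨K, hK, hKU, hfK⟩ := hf
  obtain ⟨M, hM⟩ := hK.bddBelow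
  refine ⟨min M b - 1, by linarith [min_le_right M b], K, hK, fun x hx => ⟨?_, hKU hx⟩, hfK⟩
  linarith [hM hx, min_le_left M b]

lemma exists_homeomorph_eq {F : ℝ → ℝ} (hF : StrictMono F ∨ StrictAnti F) (hs : Surjective F) :
    ∃ H : ℝ ≃ₜ ℝ, ⇑H = F := by
  rcases hF with hF | hF
  · exact ⟨ofStrictMono F hF hs, rfl⟩
  · refine ⟨ofStrictMono (fun x => F (-x)) (fun a b hab => hF (neg_lt_neg hab))
      (fun y => let ⟨x, hx⟩ := hs y; ⟨-x, by simp only [neg_neg, hx]⟩) * Homeomorph.neg ℝ, ?_⟩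
    ext x
    change F (- -x) = F x
    rw [neg_neg]

end HomeoReal

namespace HomeoC

open HomeoReal

/-! ### Segments and connectedness in `Homeo_c(ℝ)` -/

def segmentFun (f g : ℝ ≃ₜ ℝ) (t : I) (x : ℝ) : ℝ := (1 - t) * f x + t * g x

variable {f g : ℝ ≃ₜ ℝ}

lemma strictMono_segmentFun (hf : f ∈ HomeoC) (hg : g ∈ HomeoC) (t : I) :
    StrictMono (segmentFun f g t) := fun x y hxy => by
  have := convex_Ioi (0 : ℝ) (sub_pos.2 (strictMono_of_mem_homeoC hf hxy))
    (sub_pos.2 (strictMono_of_mem_homeoC hg hxy)) (sub_nonneg.2 t.2.2) t.2.1 (sub_add_cancel 1 _)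
  simp only [segmentFun, smul_eq_mul, mem_Ioi] at this ⊢
  linarith

lemma segmentFun_eq_outside {K L : Set ℝ} (hfK : ∀ x ∉ K, f x = x) (hgL : ∀ x ∉ L, g x = x)
    (t : I) : ∀ x ∉ K ∪ L, segmentFun f g t x = x := fun x hx => by
  rw [mem_union, not_or] at hx
  rw [segmentFun, hfK x hx.1, hgL x hx.2]
  ring

lemma continuous_segmentFun : Continuous fun p : I × ℝ => segmentFun f g p.1 p.2 := by
  have := f.continuous
  have := g.continuous
  unfold segmentFun
  fun_prop

lemma surjective_segmentFun (hf : f ∈ HomeoC) (hg : g ∈ HomeoC) (t : I) :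
    Surjective (segmentFun f g t) := by
  obtain ⟨K, hK, hfK⟩ := hf
  obtain ⟨L, hL, hgL⟩ := hg
  exact surjective_of_eq_outside (continuous_segmentFun.comp (Continuous.prodMk_right t))
    (hK.union hL) (segmentFun_eq_outside hfK hgL t)

def segment (f g : HomeoC) (t : I) : HomeoC :=
  ⟨ofStrictMono _ (strictMono_segmentFun f.2 g.2 t) (surjective_segmentFun f.2 g.2 t),
    let ⟨K, hK, hfK⟩ := f.2; let ⟨L, hL, hgL⟩ := g.2
    ⟨K ∪ L, hK.union hL, segmentFun_eq_outside hfK hgL t⟩⟩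

lemma segment_apply (f g : HomeoC) (t : I) (x : ℝ) :
    (segment f g t : ℝ ≃ₜ ℝ) x = (1 - t) * (f : ℝ ≃ₜ ℝ) x + t * (g : ℝ ≃ₜ ℝ) x := rfl

lemma segment_zero (f g : HomeoC) : segment f g 0 = f := by
  ext x; simp [segment_apply]

lemma segment_one (f g : HomeoC) : segment f g 1 = g := by
  ext x; simp [segment_apply]

lemma continuous_segment (f g : HomeoC) : Continuous (segment f g) :=
  (continuous_of_continuous_uncurry (e := fun t => (segment f g t : ℝ ≃ₜ ℝ))
    continuous_segmentFun fun t => strictMono_segmentFun f.2 g.2 t).subtype_mk _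

lemma isPreconnected_of_segment_mem {A : Set HomeoC}
    (hA : ∀ f ∈ A, ∀ g ∈ A, ∀ t, segment f g t ∈ A) : IsPreconnected A :=
  isPreconnected_of_forall_pair fun f hf g hg =>
    ⟨range (segment f g), range_subset_iff.2 (hA f hf g hg), ⟨0, segment_zero f g⟩,
      ⟨1, segment_one f g⟩, isPreconnected_range (continuous_segment f g)⟩

lemma isPreconnected_setOf_apply_mem {J : Set ℝ} (hJ : Convex ℝ J) (x : ℝ) :
    IsPreconnected {f : HomeoC | (f : ℝ ≃ₜ ℝ) x ∈ J} :=
  isPreconnected_of_segment_mem fun _ hf _ hg t =>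
    hJ hf hg (sub_nonneg.2 t.2.2) t.2.1 (sub_add_cancel 1 _)

lemma isPreconnected_setOf_supportedIn (U : Set ℝ) :
    IsPreconnected {f : HomeoC | SupportedIn f U} :=
  isPreconnected_of_segment_mem fun _ ⟨K, hK, hKU, hfK⟩ _ ⟨L, hL, hLU, hgL⟩ t =>
    ⟨K ∪ L, hK.union hL, union_subset hKU hLU, segmentFun_eq_outside hfK hgL t⟩

instance : PreconnectedSpace HomeoC :=
  ⟨by simpa using isPreconnected_setOf_apply_mem convex_univ 0⟩

def supportSubgroup (U : Set ℝ) : Subgroup HomeoC where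
  carrier := {f | SupportedIn f U}
  one_mem' := SupportedIn.one U
  mul_mem' := SupportedIn.mul
  inv_mem' := SupportedIn.inv

lemma exists_eq_commutator_of_mem_supportSubgroup {U : Set ℝ}
    (hU : ∀ f : ℝ ≃ₜ ℝ, SupportedIn f U → ∃ a b, a < b ∧ Ioo a b ⊆ U ∧ SupportedIn f (Ioo a b))
    {f : HomeoC} (hf : f ∈ supportSubgroup U) :
    ∃ u ∈ supportSubgroup U, ∃ v ∈ supportSubgroup U, f = ⁅u, v⁆ := by
  obtain ⟨a, b, hab, hU, hf⟩ := hU f hf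
  obtain ⟨u, v, hu, hv, hfuv⟩ := hf.exists_eq_commutator hab
  exact ⟨⟨u, hu.mem_homeoC⟩, hu.mono hU, ⟨v, hv.mem_homeoC⟩, hv.mono hU, Subtype.ext hfuv⟩

lemma exists_eq_commutator_of_mem_supportSubgroup_Ioi {f : HomeoC}
    (hf : f ∈ supportSubgroup (Ioi 0)) :
    ∃ u ∈ supportSubgroup (Ioi 0), ∃ v ∈ supportSubgroup (Ioi 0), f = ⁅u, v⁆ :=
  exists_eq_commutator_of_mem_supportSubgroup (fun _ hg =>
    let ⟨b, hb, hg⟩ := hg.exists_Ioo_of_Ioi; ⟨0, b, hb, Ioo_subset_Ioi_self, hg⟩) hf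

lemma exists_eq_commutator_of_mem_supportSubgroup_Iio {f : HomeoC}
    (hf : f ∈ supportSubgroup (Iio 0)) :
    ∃ u ∈ supportSubgroup (Iio 0), ∃ v ∈ supportSubgroup (Iio 0), f = ⁅u, v⁆ :=
  exists_eq_commutator_of_mem_supportSubgroup (fun _ hg =>
    let ⟨a, ha, hg⟩ := hg.exists_Ioo_of_Iio; ⟨a, 0, ha, Ioo_subset_Iio_self, hg⟩) hf

lemma commute_of_mem_supportSubgroup_Ioi_Iio {a b : HomeoC} (ha : a ∈ supportSubgroup (Ioi 0))
    (hb : b ∈ supportSubgroup (Iio 0)) : Commute a b :=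
  Subtype.ext (commute_of_disjoint ha hb Ioi_disjoint_Iio_same).eq

lemma exists_conj_mem_supportSubgroup_Ioi (f : HomeoC) :
    ∃ k : HomeoC, k * f * k⁻¹ ∈ supportSubgroup (Ioi 0) := by
  obtain ⟨K, hK, hfK⟩ := f.2
  obtain ⟨c, hc⟩ := hK.bddBelow
  have hsu : c - 1 < c := by linarith
  have hut : c < |c| + 2 := by linarith [le_abs_self c]
  have hsv : c - 1 < |c| + 1 := by linarith [le_abs_self c]
  have hvt : |c| + 1 < |c| + 2 := by linarith
  set k := bump hsu hut hsv hvt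
  refine ⟨⟨k, (supportedIn_bump hsu hut hsv hvt).mem_homeoC⟩,
    (SupportedIn.conj ⟨K, hK, fun x hx => hc hx, hfK⟩ k).mono ?_⟩
  rintro _ ⟨x, hx, rfl⟩
  calc (0 : ℝ) < |c| + 1 := by positivity
    _ = k c := (bump_apply_self hsu hut hsv hvt).symm
    _ ≤ k x := (strictMono_bump hsu hut hsv hvt).monotone hx

lemma exists_conj_mem_supportSubgroup_Iio (f : HomeoC) :
    ∃ k : HomeoC, k * f * k⁻¹ ∈ supportSubgroup (Iio 0) := by
  obtain ⟨K, hK, hfK⟩ := f.2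
  obtain ⟨d, hd⟩ := hK.bddAbove
  have hsu : -|d| - 2 < d := by linarith [neg_abs_le d]
  have hut : d < d + 1 := by linarith
  have hsv : -|d| - 2 < -|d| - 1 := by linarith
  have hvt : -|d| - 1 < d + 1 := by linarith [neg_abs_le d]
  set k := bump hsu hut hsv hvt
  refine ⟨⟨k, (supportedIn_bump hsu hut hsv hvt).mem_homeoC⟩,
    (SupportedIn.conj ⟨K, hK, fun x hx => hd hx, hfK⟩ k).mono ?_⟩
  rintro _ ⟨x, hx, rfl⟩
  calc k x ≤ k d := (strictMono_bump hsu hut hsv hvt).monotone hx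
    _ = -|d| - 1 := bump_apply_self hsu hut hsv hvt
    _ < 0 := by linarith [abs_nonneg d]

def stabZero : Subgroup HomeoC where
  carrier := {f | (f : ℝ ≃ₜ ℝ) 0 = 0}
  one_mem' := rfl
  mul_mem' {a b} (ha : (a : ℝ ≃ₜ ℝ) 0 = 0) (hb : (b : ℝ ≃ₜ ℝ) 0 = 0) := by
    change (a : ℝ ≃ₜ ℝ) ((b : ℝ ≃ₜ ℝ) 0) = 0
    rw [hb, ha]
  inv_mem' {a} (ha : (a : ℝ ≃ₜ ℝ) 0 = 0) := (a : ℝ ≃ₜ ℝ).symm_apply_eq.2 ha.symm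

lemma isPreconnected_stabZero : IsPreconnected (stabZero : Set HomeoC) :=
  isPreconnected_setOf_apply_mem (convex_singleton 0) 0

lemma conj_mem_supportSubgroup_Ioi {s b : HomeoC} (hs : s ∈ stabZero)
    (hb : b ∈ supportSubgroup (Ioi 0)) :
    s⁻¹ * b * s ∈ supportSubgroup (Ioi 0) := by
  have := SupportedIn.conj hb (s : ℝ ≃ₜ ℝ)⁻¹
  rw [inv_inv] at this
  refine this.mono ?_
  rintro _ ⟨y, hy, rfl⟩
  rw [mem_Ioi, ← (strictMono_of_mem_homeoC s.2).lt_iff_lt, hs]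
  exact hy.trans_eq ((s : ℝ ≃ₜ ℝ).apply_symm_apply y).symm

lemma conj_mem_supportSubgroup_Iio {s b : HomeoC} (hs : s ∈ stabZero)
    (hb : b ∈ supportSubgroup (Iio 0)) :
    s⁻¹ * b * s ∈ supportSubgroup (Iio 0) := by
  have := SupportedIn.conj hb (s : ℝ ≃ₜ ℝ)⁻¹
  rw [inv_inv] at this
  refine this.mono ?_
  rintro _ ⟨y, hy, rfl⟩
  rw [mem_Iio, ← (strictMono_of_mem_homeoC s.2).lt_iff_lt, hs]
  exact ((s : ℝ ≃ₜ ℝ).apply_symm_apply y).trans_lt hy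

lemma exists_mem_stabZero_apply_eq {c d : ℝ} (h : 0 < c * d) :
    ∃ s ∈ stabZero, (s : ℝ ≃ₜ ℝ) c = d := by
  rcases pos_and_pos_or_neg_and_neg_of_mul_pos h with ⟨hc, hd⟩ | ⟨hc, hd⟩
  · have hct : c < max c d + 1 := by linarith [le_max_left c d]
    have hdt : d < max c d + 1 := by linarith [le_max_right c d]
    exact ⟨⟨_, (supportedIn_bump hc hct hd hdt).mem_homeoC⟩,
      bump_apply_of_not_mem hc hct hd hdt fun h => lt_irrefl 0 h.1, bump_apply_self hc hct hd hdt⟩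
  · have hsc : min c d - 1 < c := by linarith [min_le_left c d]
    have hsd : min c d - 1 < d := by linarith [min_le_right c d]
    exact ⟨⟨_, (supportedIn_bump hsc hc hsd hd).mem_homeoC⟩,
      bump_apply_of_not_mem hsc hc hsd hd fun h => lt_irrefl 0 h.2, bump_apply_self hsc hc hsd hd⟩

lemma exists_apply_zero_eq (a : ℝ) : ∃ f : HomeoC, (f : ℝ ≃ₜ ℝ) 0 = a := by
  have hsu : -|a| - 1 < 0 := by linarith [abs_nonneg a]
  have hut : (0 : ℝ) < |a| + 1 := by linarith [abs_nonneg a]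
  have hsv : -|a| - 1 < a := by linarith [neg_abs_le a]
  have hvt : a < |a| + 1 := by linarith [le_abs_self a]
  exact ⟨⟨_, (supportedIn_bump hsu hut hsv hvt).mem_homeoC⟩, bump_apply_self hsu hut hsv hvt⟩

lemma eq_top_of_stabZero_le {H : Subgroup HomeoC} (hH : stabZero ≤ H) {f : HomeoC} (hf : f ∈ H)
    (hf0 : (f : ℝ ≃ₜ ℝ) 0 ≠ 0) : H = ⊤ := by
  have hfm := strictMono_of_mem_homeoC f.2
  have hopp : (f : ℝ ≃ₜ ℝ) 0 * ((f⁻¹ : HomeoC) : ℝ ≃ₜ ℝ) 0 < 0 := by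
    have h0 : (f : ℝ ≃ₜ ℝ) (((f⁻¹ : HomeoC) : ℝ ≃ₜ ℝ) 0) = 0 := (f : ℝ ≃ₜ ℝ).apply_symm_apply 0
    rcases hf0.lt_or_gt with h | h
    · exact mul_neg_of_neg_of_pos h (hfm.lt_iff_lt.1 (h.trans_eq h0.symm))
    · exact mul_neg_of_pos_of_neg h (hfm.lt_iff_lt.1 (h0.trans_lt h))
  have hmove : ∀ y, ∃ w ∈ H, (w : ℝ ≃ₜ ℝ) 0 = y := by
    intro y
    rcases eq_or_ne y 0 with rfl | hy
    · exact ⟨1, H.one_mem, rfl⟩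
    obtain ⟨w, hw, hwy⟩ : ∃ w ∈ H, 0 < (w : ℝ ≃ₜ ℝ) 0 * y := by
      by_contra! h
      nlinarith [h f hf, h f⁻¹ (H.inv_mem hf), sq_pos_of_ne_zero hy]
    obtain ⟨s, hs, hsy⟩ := exists_mem_stabZero_apply_eq hwy
    exact ⟨s * w, H.mul_mem (hH hs) hw, hsy⟩
  refine eq_top_iff.2 fun g _ => ?_
  obtain ⟨w, hw, hwg⟩ := hmove ((g : ℝ ≃ₜ ℝ) 0)
  have hwg' : w⁻¹ * g ∈ stabZero := (w : ℝ ≃ₜ ℝ).symm_apply_eq.2 hwg.symm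
  simpa using H.mul_mem hw (hH hwg')

/-! ### Continuous representations -/

section Representation

variable (ψ : HomeoC →* ℝ ≃ₜ ℝ)

lemma continuous_map_apply (hψ : Continuous ψ) (x : ℝ) : Continuous fun f => ψ f x :=
  (continuous_apply x).comp hψ

lemma strictMono_map (hψ : Continuous ψ) (f : HomeoC) : StrictMono (ψ f) := by
  have hpos : ψ f 0 < ψ f 1 :=
    isPreconnected_univ.apply_lt_of_forall_ne (continuous_map_apply ψ hψ 0).continuousOn
      (continuous_map_apply ψ hψ 1).continuousOn (fun g _ h => zero_ne_one ((ψ g).injective h))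
      (mem_univ 1) (mem_univ f) (by simp)
  exact ((ψ f).continuous.strictMono_of_inj (ψ f).injective).resolve_right fun h =>
    (h zero_lt_one).not_gt hpos

lemma image_orbit (A : Subgroup HomeoC) {f : HomeoC} (hf : f ∈ A) (p : ℝ) :
    ψ f '' ((fun g => ψ g p) '' A) = (fun g => ψ g p) '' A := by
  rw [image_image]
  ext z
  constructor
  · rintro ⟨g, hg, rfl⟩
    exact ⟨f * g, A.mul_mem hf hg, by simp only [map_mul, homeo_mul_apply]⟩
  · rintro ⟨g, hg, rfl⟩
    exact ⟨f⁻¹ * g, A.mul_mem (A.inv_mem hf) hg, by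
      simp only [← homeo_mul_apply, ← map_mul, mul_inv_cancel_left]⟩

/-- The orbit is an interval, and a finite endpoint of it is fixed by `ψ(A)`. -/
lemma exists_fixed_mem_closure (hψ : Continuous ψ) {A : Subgroup HomeoC}
    (hA : IsPreconnected (A : Set HomeoC)) {p : ℝ} (hO : (fun g => ψ g p) '' A ≠ univ) :
    ∃ q ∈ closure ((fun g => ψ g p) '' A), ∀ f ∈ A, ψ f q = q := by
  set O := (fun g => ψ g p) '' A
  have hne : O.Nonempty := ⟨p, 1, A.one_mem, by simp⟩
  have hmono := fun f => (strictMono_map ψ hψ f).monotone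
  by_cases hbdd : BddAbove O
  · refine ⟨sSup O, csSup_mem_closure hne hbdd, fun f hf => ?_⟩
    rw [(hmono f).map_csSup_of_continuousAt (ψ f).continuous.continuousAt hne hbdd,
      image_orbit ψ A hf p]
  have hbdd' : BddBelow O := by
    by_contra h
    exact hO ((hA.image _ (continuous_map_apply ψ hψ p).continuousOn).eq_univ_of_unbounded h hbdd)
  refine ⟨sInf O, csInf_mem_closure hne hbdd', fun f hf => ?_⟩
  rw [(hmono f).map_csInf_of_continuousAt (ψ f).continuous.continuousAt hne hbdd',
    image_orbit ψ A hf p]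

lemma exists_fixed_or_exists_apply_eq (hψ : Continuous ψ) {A : Subgroup HomeoC}
    (hA : IsPreconnected (A : Set HomeoC)) :
    (∃ q, ∀ f ∈ A, ψ f q = q) ∨ ∀ p z : ℝ, ∃ f ∈ A, ψ f p = z := by
  refine or_iff_not_imp_right.2 fun h => ?_
  push Not at h
  obtain ⟨p, z, hz⟩ := h
  obtain ⟨q, -, hq⟩ := exists_fixed_mem_closure ψ hψ hA (p := p) fun hO =>
    let ⟨f, hf, hfz⟩ := (hO ▸ mem_univ z : z ∈ (fun g => ψ g p) '' A); hz f hf hfz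
  exact ⟨q, hq⟩

def fixedSet (A : Set HomeoC) : Set ℝ := {x | ∀ f ∈ A, ψ f x = x}

lemma isClosed_fixedSet (A : Set HomeoC) : IsClosed (fixedSet ψ A) := by
  simp only [fixedSet, ofPred_forall]
  exact isClosed_iInter fun f => isClosed_iInter fun _ =>
    isClosed_eq (ψ f).continuous continuous_id

lemma mapsTo_fixedSet {A B : Set HomeoC} (hAB : ∀ b ∈ B, ∀ a ∈ A, b⁻¹ * a * b ∈ A) {b : HomeoC}
    (hb : b ∈ B) : MapsTo (ψ b) (fixedSet ψ A) (fixedSet ψ A) := fun x hx a ha => by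
  rw [← homeo_mul_apply, ← map_mul, show a * b = b * (b⁻¹ * a * b) by group, map_mul,
    homeo_mul_apply, hx _ (hAB b hb a ha)]

lemma exists_fixed_mem_of_mapsTo (hψ : Continuous ψ) {A : Subgroup HomeoC}
    (hA : IsPreconnected (A : Set HomeoC)) {X : Set ℝ} (hX : IsClosed X) (hXne : X.Nonempty)
    (hXuniv : X ≠ univ) (hmaps : ∀ f ∈ A, MapsTo (ψ f) X X) : ∃ q ∈ X, ∀ f ∈ A, ψ f q = q := by
  obtain ⟨p, hp⟩ := hXne
  have hOX : (fun g => ψ g p) '' A ⊆ X := by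
    rintro _ ⟨g, hg, rfl⟩
    exact hmaps g hg hp
  obtain ⟨q, hqO, hq⟩ :=
    exists_fixed_mem_closure ψ hψ hA fun hO => hXuniv (univ_subset_iff.1 (hO ▸ hOX))
  exact ⟨q, hX.closure_subset_iff.2 hOX hqO, hq⟩

lemma exists_mem_map_ne_one {S : Subgroup HomeoC}
    (hS : ∀ f : HomeoC, ∃ k, k * f * k⁻¹ ∈ S) (hψ1 : ∃ f, ψ f ≠ 1) : ∃ b ∈ S, ψ b ≠ 1 := by
  obtain ⟨f, hf⟩ := hψ1
  obtain ⟨k, hk⟩ := hS f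
  refine ⟨_, hk, fun h => hf ?_⟩
  rw [show f = k⁻¹ * (k * f * k⁻¹) * k by group, map_mul, map_mul, h, mul_one, ← map_mul,
    inv_mul_cancel, map_one]

lemma exists_fixed_of_commute (hψ : Continuous ψ) {A B : Subgroup HomeoC}
    (hA : IsPreconnected (A : Set HomeoC)) (hAB : ∀ a ∈ A, ∀ b ∈ B, Commute a b)
    (hB : ∀ b ∈ B, ∃ u ∈ B, ∃ v ∈ B, b = ⁅u, v⁆) (hψB : ∃ b ∈ B, ψ b ≠ 1) :
    ∃ q, ∀ a ∈ A, ψ a q = q := by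
  refine (exists_fixed_or_exists_apply_eq ψ hψ hA).resolve_right fun htrans => ?_
  have hΓ : IsFreeIncreasing (B.map ψ) := by
    refine ⟨fun _ ⟨b, _, hb⟩ => hb ▸ strictMono_map ψ hψ b, ?_⟩
    rintro _ ⟨b, hb, rfl⟩ x hx
    ext z
    obtain ⟨a, ha, rfl⟩ := htrans x z
    change ψ b (ψ a x) = ψ a x
    rw [← homeo_mul_apply, ← map_mul, ← (hAB a ha b hb).eq, map_mul, homeo_mul_apply, hx]
  obtain ⟨b, hb, hψb⟩ := hψB
  obtain ⟨u, hu, v, hv, rfl⟩ := hB b hb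
  rw [map_commutatorElement, Ne, commutatorElement_eq_one_iff_commute] at hψb
  exact hψb (hΓ.commute ⟨u, hu, rfl⟩ ⟨v, hv, rfl⟩)

theorem exists_fixed_stabZero (hψ : Continuous ψ) (hψ1 : ∃ f, ψ f ≠ 1) :
    ∃ q, ∀ s ∈ stabZero, ψ s q = q := by
  set Gpos := supportSubgroup (Ioi 0)
  set Gneg := supportSubgroup (Iio 0)
  have hcomm : ∀ a ∈ Gpos, ∀ b ∈ Gneg, Commute a b := fun _ ha _ hb =>
    commute_of_mem_supportSubgroup_Ioi_Iio ha hb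
  obtain ⟨q₁, hq₁⟩ := exists_fixed_of_commute ψ hψ (isPreconnected_setOf_supportedIn _) hcomm
    (fun _ hb => exists_eq_commutator_of_mem_supportSubgroup_Iio hb)
    (exists_mem_map_ne_one ψ exists_conj_mem_supportSubgroup_Iio hψ1)
  obtain ⟨b, hb, hψb⟩ := exists_mem_map_ne_one ψ exists_conj_mem_supportSubgroup_Ioi hψ1
  have hX : fixedSet ψ Gpos ≠ univ := fun h =>
    hψb (Homeomorph.ext fun x => (h ▸ mem_univ x : x ∈ fixedSet ψ Gpos) b hb)
  have hnormal : ∀ c ∈ Gneg, ∀ a ∈ Gpos, c⁻¹ * a * c ∈ Gpos := fun c hc a ha => by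
    rwa [mul_assoc, (hcomm a ha c hc).eq, inv_mul_cancel_left]
  obtain ⟨q₂, hq₂X, hq₂⟩ := exists_fixed_mem_of_mapsTo ψ hψ (isPreconnected_setOf_supportedIn _)
    (isClosed_fixedSet ψ Gpos) ⟨q₁, hq₁⟩ hX fun c hc => mapsTo_fixedSet ψ hnormal hc
  obtain ⟨q, -, hq⟩ := exists_fixed_mem_of_mapsTo ψ hψ isPreconnected_stabZero
    ((isClosed_fixedSet ψ Gpos).inter (isClosed_fixedSet ψ Gneg)) ⟨q₂, hq₂X, hq₂⟩
    (fun h => hX (eq_univ_of_univ_subset (h ▸ inter_subset_left))) fun s hs =>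
      (mapsTo_fixedSet ψ (fun _ hs _ hb => conj_mem_supportSubgroup_Ioi hs hb) hs).inter_inter
        (mapsTo_fixedSet ψ (fun _ hs _ hb => conj_mem_supportSubgroup_Iio hs hb) hs)
  exact ⟨q, hq⟩

def stabilizerOf (q : ℝ) : Subgroup HomeoC where
  carrier := {f | ψ f q = q}
  one_mem' := by simp
  mul_mem' {a b} (ha : ψ a q = q) (hb : ψ b q = q) := by
    change ψ (a * b) q = q
    rw [map_mul, homeo_mul_apply, hb, ha]
  inv_mem' {a} (ha : ψ a q = q) := by
    change ψ a⁻¹ q = q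
    rw [map_inv]
    exact (ψ a).symm_apply_eq.2 ha.symm

lemma map_apply_eq_self_iff (hnofix : ¬ ∃ p : ℝ, ∀ f : HomeoC, ψ f p = p) {q : ℝ}
    (hq : ∀ s ∈ stabZero, ψ s q = q) (f : HomeoC) : ψ f q = q ↔ (f : ℝ ≃ₜ ℝ) 0 = 0 := by
  refine ⟨fun hf => by_contra fun hf0 => hnofix ⟨q, fun g => ?_⟩, hq f⟩
  have hg : g ∈ stabilizerOf ψ q := by
    rw [eq_top_of_stabZero_le (H := stabilizerOf ψ q) hq hf hf0]
    exact Subgroup.mem_top g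
  exact hg

lemma exists_map_apply_eq (hψ : Continuous ψ) (hnofix : ¬ ∃ p : ℝ, ∀ f : HomeoC, ψ f p = p)
    (p z : ℝ) : ∃ g : HomeoC, ψ g p = z := by
  obtain ⟨g, -, hg⟩ := ((exists_fixed_or_exists_apply_eq ψ hψ (A := ⊤)
    (by simpa using isPreconnected_univ)).resolve_left
    fun ⟨p, hp⟩ => hnofix ⟨p, fun f => hp f (Subgroup.mem_top f)⟩) p z
  exact ⟨g, hg⟩

/-- `ψ g q` for some `g` with `g 0 = a`; when the stabilizer of `q` is that of `0`, this does not
depend on the choice of `g` (`orbitMap_apply_zero`). -/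
def orbitMap (q a : ℝ) : ℝ := ψ (exists_apply_zero_eq a).choose q

section OrbitMap

variable {ψ} {q : ℝ} (hq : ∀ f : HomeoC, ψ f q = q ↔ (f : ℝ ≃ₜ ℝ) 0 = 0)

include hq

lemma orbitMap_apply_zero (g : HomeoC) : orbitMap ψ q ((g : ℝ ≃ₜ ℝ) 0) = ψ g q := by
  set g' := (exists_apply_zero_eq ((g : ℝ ≃ₜ ℝ) 0)).choose
  have hg' : (g' : ℝ ≃ₜ ℝ) 0 = (g : ℝ ≃ₜ ℝ) 0 := (exists_apply_zero_eq _).choose_spec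
  have hfix : ψ (g'⁻¹ * g) q = q := (hq _).2 ((g' : ℝ ≃ₜ ℝ).symm_apply_eq.2 hg'.symm)
  calc orbitMap ψ q ((g : ℝ ≃ₜ ℝ) 0) = ψ g' q := rfl
    _ = ψ g' (ψ (g'⁻¹ * g) q) := by rw [hfix]
    _ = ψ g q := by rw [← homeo_mul_apply, ← map_mul, mul_inv_cancel_left]

lemma orbitMap_zero : orbitMap ψ q 0 = q := by
  simpa using orbitMap_apply_zero hq 1

lemma map_apply_orbitMap (f : HomeoC) (a : ℝ) :
    ψ f (orbitMap ψ q a) = orbitMap ψ q ((f : ℝ ≃ₜ ℝ) a) := by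
  obtain ⟨g, rfl⟩ := exists_apply_zero_eq a
  rw [orbitMap_apply_zero hq, ← homeo_mul_apply, ← map_mul, ← orbitMap_apply_zero hq]
  rfl

lemma injective_orbitMap : Injective (orbitMap ψ q) := by
  intro a b hab
  obtain ⟨g, rfl⟩ := exists_apply_zero_eq a
  obtain ⟨g', rfl⟩ := exists_apply_zero_eq b
  rw [orbitMap_apply_zero hq, orbitMap_apply_zero hq] at hab
  have h : ψ (g'⁻¹ * g) q = q := by
    rw [map_mul, homeo_mul_apply, hab, ← homeo_mul_apply, ← map_mul, inv_mul_cancel, map_one]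
    rfl
  exact (g' : ℝ ≃ₜ ℝ).symm_apply_eq.1 ((hq _).1 h)

lemma surjective_orbitMap (htrans : ∀ z, ∃ g : HomeoC, ψ g q = z) :
    Surjective (orbitMap ψ q) :=
  fun z => let ⟨g, hg⟩ := htrans z; ⟨_, (orbitMap_apply_zero hq g).trans hg⟩

/-- `ψ g q ≠ q` on the connected set `{g | 0 < g 0}`, so `orbitMap` sends `(0, ∞)` to one side
of `q`. -/
lemma lt_orbitMap_iff (hψ : Continuous ψ) {x y : ℝ} (hx : 0 < x) (hy : 0 < y) :
    q < orbitMap ψ q x ↔ q < orbitMap ψ q y := by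
  have key : ∀ x y : ℝ, 0 < x → 0 < y → q < orbitMap ψ q x → q < orbitMap ψ q y := by
    intro x y hx hy hxq
    obtain ⟨g, rfl⟩ := exists_apply_zero_eq x
    obtain ⟨g', rfl⟩ := exists_apply_zero_eq y
    rw [orbitMap_apply_zero hq] at hxq ⊢
    exact (isPreconnected_setOf_apply_mem (convex_Ioi 0) 0).apply_lt_of_forall_ne
      continuousOn_const (continuous_map_apply ψ hψ q).continuousOn
      (fun f hf h => (mem_Ioi.1 hf).ne' ((hq f).1 h.symm)) hx hy hxq
  exact ⟨key x y hx hy, key y x hy hx⟩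

lemma strictMono_or_strictAnti_orbitMap (hψ : Continuous ψ) :
    StrictMono (orbitMap ψ q) ∨ StrictAnti (orbitMap ψ q) := by
  have hne : ∀ c ≠ 0, orbitMap ψ q c ≠ q := fun c hc h =>
    hc (injective_orbitMap hq (h.trans (orbitMap_zero hq).symm))
  have hshift : ∀ a b, a < b → ∃ g : HomeoC, ∃ c > 0,
      orbitMap ψ q a = ψ g q ∧ orbitMap ψ q b = ψ g (orbitMap ψ q c) := by
    intro a b hab
    obtain ⟨g, rfl⟩ := exists_apply_zero_eq a
    refine ⟨g, (g : ℝ ≃ₜ ℝ).symm b, ?_, orbitMap_apply_zero hq g, ?_⟩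
    · rw [gt_iff_lt, ← (strictMono_of_mem_homeoC g.2).lt_iff_lt, Homeomorph.apply_symm_apply]
      exact hab
    · rw [map_apply_orbitMap hq, Homeomorph.apply_symm_apply]
  rcases (hne 1 one_ne_zero).lt_or_gt with h1 | h1
  · refine Or.inr fun a b hab => ?_
    obtain ⟨g, c, hc, ha, hb⟩ := hshift a b hab
    have hcq : orbitMap ψ q c < q := (hne c hc.ne').lt_of_le
      (not_lt.1 fun h => h1.not_gt ((lt_orbitMap_iff hq hψ hc one_pos).1 h))
    rw [ha, hb]
    exact strictMono_map ψ hψ g hcq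
  · refine Or.inl fun a b hab => ?_
    obtain ⟨g, c, hc, ha, hb⟩ := hshift a b hab
    rw [ha, hb]
    exact strictMono_map ψ hψ g ((lt_orbitMap_iff hq hψ hc one_pos).2 h1)

end OrbitMap

end Representation

end HomeoC

open HomeoC HomeoReal

/-- Any continuous group morphism `ψ : Homeo_c(ℝ) → Homeo(ℝ)` whose image has no global
fixed point is a conjugacy by some homeomorphism `h` of the line: `ψ(f) = h ∘ f ∘ h⁻¹`. -/
theorem stmt6 (ψ : HomeoC →* (ℝ ≃ₜ ℝ)) (hcont : Continuous ψ)
    (hnofix : ¬ ∃ p : ℝ, ∀ f : HomeoC, ψ f p = p) :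
    ∃ h : ℝ ≃ₜ ℝ, ∀ (f : HomeoC) (x : ℝ), ψ f x = h ((f : ℝ ≃ₜ ℝ) (h.symm x)) := by
  have hψ1 : ∃ f, ψ f ≠ 1 := by
    by_contra! h
    exact hnofix ⟨0, fun f => by rw [h f]; rfl⟩
  obtain ⟨q, hq⟩ := exists_fixed_stabZero ψ hcont hψ1
  have hq' := map_apply_eq_self_iff ψ hnofix hq
  obtain ⟨h, hh⟩ := exists_homeomorph_eq (strictMono_or_strictAnti_orbitMap hq' hcont)
    (surjective_orbitMap hq' (exists_map_apply_eq ψ hcont hnofix q))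
  refine ⟨h, fun f x => ?_⟩
  obtain ⟨y, rfl⟩ := h.surjective x
  rw [h.symm_apply_apply, hh, map_apply_orbitMap hq']
end
end

section
/- Let $\psi : \mathrm{Homeo}_c(\mathbb{R}) \to \mathrm{Homeo}(\mathbb{R})$ be an injective continuous group morphism whose image has no global fixed point, and for $x \in \mathbb{R}$ let $F_x$ denote the set of common fixed points of $\psi(G_x)$, where $G_x$ is the group of compactly supported homeomorphisms fixing a neighbourhood of $x$. Then for distinct points $x \neq y$, the sets $F_x$ and $F_y$ are disjoint. -/
noncomputable section

/-- The set `F_x` of common fixed points of `ψ(G_x)`, where `G_x ≤ Homeo_c(ℝ)` consists of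
the homeomorphisms fixing pointwise a neighbourhood of `x`. -/
def FixSet (ψ : HomeoC →* (ℝ ≃ₜ ℝ)) (x : ℝ) : Set ℝ :=
  {p | ∀ f : HomeoC, FixesNbhd (f : ℝ ≃ₜ ℝ) {x} → ψ f p = p}

/-- If `ψ : Homeo_c(ℝ) → Homeo(ℝ)` is an injective continuous morphism whose image has no
global fixed point, then for `x ≠ y` the sets `F_x` and `F_y` are disjoint.  (One may use
the fragmentation fact that `G_x` and `G_y` generate `Homeo_c(ℝ)`.) -/
theorem stmt8 (ψ : HomeoC →* (ℝ ≃ₜ ℝ)) (hinj : Function.Injective ψ)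
    (hcont : Continuous ψ)
    (hnofix : ¬ ∃ p : ℝ, ∀ f : HomeoC, ψ f p = p)
    (hfrag : ∀ x y : ℝ, x ≠ y →
      Subgroup.closure ({f : HomeoC | FixesNbhd (f : ℝ ≃ₜ ℝ) {x}} ∪
        {f : HomeoC | FixesNbhd (f : ℝ ≃ₜ ℝ) {y}}) = ⊤)
    (x y : ℝ) (hxy : x ≠ y) :
    Disjoint (FixSet ψ x) (FixSet ψ y) := by
  rw [Set.disjoint_left]
  intro p hpx hpy
  refine hnofix ⟨p, fun f => ?_⟩
  have hf : f ∈ Subgroup.closure ({f : HomeoC | FixesNbhd (f : ℝ ≃ₜ ℝ) {x}} ∪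
      {f : HomeoC | FixesNbhd (f : ℝ ≃ₜ ℝ) {y}}) := by
    rw [hfrag x y hxy]; trivial
  refine Subgroup.closure_induction (fun g hg => ?_) ?_ (fun a b _ _ ha hb => ?_)
    (fun a _ ha => ?_) hf
  · rcases hg with hg | hg
    · exact hpx g hg
    · exact hpy g hg
  · rw [map_one]; rfl
  · rw [map_mul]; show ψ a (ψ b p) = p; rw [hb, ha]
  · rw [map_inv]
    show (ψ a).symm p = p
    exact (ψ a).symm_apply_eq.mpr ha.symm
end
end

section
/- For distinct points $x \neq y$ of $\mathbb{R}$, the subgroups $G_x$ and $G_y$ of compactly supported homeomorphisms fixing a neighbourhood of $x$, respectively of $y$, generate the whole group $\mathrm{Homeo}_c(\mathbb{R})$. -/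
noncomputable section

open Set Function

namespace Stmt9Aux

/-- interpolation: `f` below `a`, affine on `[a,b]` from `f a` to `b`, identity above `b`. -/
noncomputable def interp (f : ℝ → ℝ) (a b t : ℝ) : ℝ :=
  if t ≤ a then f t else if t ≤ b then f a + (t - a) * ((b - f a) / (b - a)) else t

variable {f : ℝ → ℝ} {a b : ℝ}

theorem interp_of_le {t : ℝ} (ht : t ≤ a) : interp f a b t = f t := if_pos ht

theorem interp_of_ge (hab : a < b) (hfa : f a < b) {t : ℝ} (ht : b ≤ t) :
    interp f a b t = t := by
  unfold interp
  rcases eq_or_lt_of_le ht with rfl | h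
  · rw [if_neg (by linarith), if_pos le_rfl]
    have key : (b - a) * ((b - f a) / (b - a)) = b - f a := by
      rw [mul_comm, div_mul_cancel₀ _ (show b - a ≠ 0 by linarith)]
    nlinarith [key]
  · rw [if_neg (by linarith), if_neg (by linarith)]

theorem interp_strictMono (hab : a < b) (hm : StrictMono f) (hfa : f a < b) :
    StrictMono (interp f a b) := by
  have hba : 0 < b - a := by linarith
  have hs : 0 < (b - f a) / (b - a) := div_pos (by linarith) hba
  have key : (b - a) * ((b - f a) / (b - a)) = b - f a := by field_simp
  intro t u htu
  unfold interp
  split_ifs with h1 h2 h3 h4 h5 h6 h7 h8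
  · exact hm htu
  · nlinarith [hm.monotone h1, mul_pos (show (0:ℝ) < u - a by linarith) hs]
  · have := hm.monotone h1; linarith
  · linarith
  · nlinarith [mul_pos (show (0:ℝ) < u - t by linarith) hs]
  · nlinarith [mul_le_mul_of_nonneg_right (show t - a ≤ b - a by linarith) hs.le]
  · linarith
  · linarith
  · exact htu

theorem interp_continuous (hab : a < b) (hfc : Continuous f) :
    Continuous (interp f a b) := by
  have hba : b - a ≠ 0 := by linarith
  have inner : Continuous fun t : ℝ =>
      if t ≤ b then f a + (t - a) * ((b - f a) / (b - a)) else t := by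
    apply Continuous.if_le (by fun_prop) continuous_id continuous_id continuous_const
    intro t ht
    replace ht : t = b := ht
    rw [ht]
    simp only [id_eq]
    have key : (b - a) * ((b - f a) / (b - a)) = b - f a := by
      rw [mul_comm, div_mul_cancel₀ _ (show b - a ≠ 0 by linarith)]
    nlinarith [key]
  apply Continuous.if_le hfc inner continuous_id continuous_const
  intro t ht
  replace ht : t = a := ht
  rw [ht, if_pos hab.le]
  ring

theorem interp_surjective (hab : a < b) (hm : StrictMono f) (hsurj : Surjective f)
    (hfa : f a < b) : Surjective (interp f a b) := by
  have hba : 0 < b - a := by linarith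
  have hfb : 0 < b - f a := by linarith
  intro z
  rcases le_or_gt z (f a) with hz | hz
  · obtain ⟨t, rfl⟩ := hsurj z
    have ht : t ≤ a := by
      by_contra h
      push_neg at h
      exact absurd (hm h) (not_lt.mpr hz)
    exact ⟨t, if_pos ht⟩
  rcases le_or_gt z b with hz2 | hz2
  · refine ⟨a + (z - f a) * ((b - a) / (b - f a)), ?_⟩
    have hpos : 0 < (z - f a) * ((b - a) / (b - f a)) :=
      mul_pos (by linarith) (div_pos hba hfb)
    have hle : (z - f a) * ((b - a) / (b - f a)) ≤ b - a := by
      rw [mul_div_assoc', div_le_iff₀ hfb]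
      nlinarith
    unfold interp
    rw [if_neg (by linarith), if_pos (by linarith)]
    field_simp
    ring
  · exact ⟨z, interp_of_ge hab hfa hz2.le⟩

/-- ramp: identity below `p`, affine with slope `s` above `p`. -/
noncomputable def ramp (p s t : ℝ) : ℝ := max t (p + s * (t - p))

theorem ramp_of_le {p s t : ℝ} (hs : 1 ≤ s) (ht : t ≤ p) : ramp p s t = t := by
  unfold ramp
  have : p + s * (t - p) ≤ t := by nlinarith
  exact max_eq_left this

theorem ramp_of_ge {p s t : ℝ} (hs : 1 ≤ s) (ht : p ≤ t) : ramp p s t = p + s * (t - p) := by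
  unfold ramp
  have : t ≤ p + s * (t - p) := by nlinarith
  exact max_eq_right this

theorem ramp_strictMono {p s : ℝ} (hs : 0 < s) : StrictMono (ramp p s) := by
  have h1 : StrictMono fun t : ℝ => t := strictMono_id
  have h2 : StrictMono fun t : ℝ => p + s * (t - p) := by
    intro u v huv
    dsimp only
    nlinarith
  exact fun u v huv => max_lt_max (h1 huv) (h2 huv)

theorem ramp_continuous (p s : ℝ) : Continuous (ramp p s) := by
  unfold ramp
  fun_prop

theorem ramp_surjective {p s : ℝ} (hs : 1 ≤ s) : Surjective (ramp p s) := by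
  intro z
  rcases le_or_gt z p with hz | hz
  · exact ⟨z, ramp_of_le hs hz⟩
  · refine ⟨p + (z - p) / s, ?_⟩
    have hs0 : 0 < s := by linarith
    have h1 : 0 ≤ (z - p) / s := div_nonneg (by linarith) hs0.le
    rw [ramp_of_ge hs (by linarith)]
    field_simp
    ring

noncomputable def mkHomeo (f : ℝ → ℝ) (hm : StrictMono f) (hs : Surjective f) : ℝ ≃ₜ ℝ :=
  (StrictMono.orderIsoOfSurjective f hm hs).toHomeomorph

@[simp] theorem mkHomeo_apply (f : ℝ → ℝ) (hm : StrictMono f) (hs : Surjective f) (t : ℝ) :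
    mkHomeo f hm hs t = f t := rfl

theorem mkHomeo_symm_apply (f : ℝ → ℝ) (hm : StrictMono f) (hs : Surjective f) {t z : ℝ}
    (h : f t = z) : (mkHomeo f hm hs).symm z = t := by
  subst h
  exact StrictMono.orderIsoOfSurjective_symm_apply_self f hm hs t

theorem symm_strictMono {e : ℝ ≃ₜ ℝ} (hm : StrictMono ⇑e) : StrictMono ⇑e.symm := by
  intro u v h
  rw [← hm.lt_iff_lt]
  simpa using h

theorem mem_homeoC_iff {f : ℝ ≃ₜ ℝ} :
    f ∈ HomeoC ↔ ∃ C : Set ℝ, IsCompact C ∧ ∀ x ∉ C, f x = x := Iff.rfl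

theorem strictMono_of_mem {f : ℝ ≃ₜ ℝ} (hf : f ∈ HomeoC) : StrictMono ⇑f := by
  obtain ⟨C, hC, hfix⟩ := mem_homeoC_iff.mp hf
  obtain ⟨B, hB⟩ := hC.bddAbove
  have hout : ∀ t ∈ Icc (B + 1) (B + 2), t ∉ C := by
    intro t ht htC
    have := hB htC
    have := ht.1
    linarith
  have hmono : StrictMonoOn ⇑f (Icc (B + 1) (B + 2)) := by
    intro u hu v hv huv
    rw [hfix u (hout u hu), hfix v (hout v hv)]
    exact huv
  exact f.continuous.strictMonoOn_of_inj_rigidity f.injective (by linarith) hmono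

def gens (x y : ℝ) : Set HomeoC :=
  {f : HomeoC | FixesNbhd (f : ℝ ≃ₜ ℝ) {x}} ∪ {f : HomeoC | FixesNbhd (f : ℝ ≃ₜ ℝ) {y}}

theorem mem_gens_left {x y : ℝ} {f : HomeoC} {U : Set ℝ} (hU : IsOpen U) (hx : x ∈ U)
    (hfix : ∀ t ∈ U, (f : ℝ ≃ₜ ℝ) t = t) : f ∈ gens x y :=
  Or.inl ⟨U, hU, Set.singleton_subset_iff.mpr hx, hfix⟩

theorem mem_gens_right {x y : ℝ} {f : HomeoC} {U : Set ℝ} (hU : IsOpen U) (hy : y ∈ U)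
    (hfix : ∀ t ∈ U, (f : ℝ ≃ₜ ℝ) t = t) : f ∈ gens x y :=
  Or.inr ⟨U, hU, Set.singleton_subset_iff.mpr hy, hfix⟩

theorem step1 {x y : ℝ} (hxy : x < y) (f : ℝ ≃ₜ ℝ) (hf : f ∈ HomeoC)
    (hm : StrictMono ⇑f) (h1 : f x < y) (h2 : x < f y) :
    (⟨f, hf⟩ : HomeoC) ∈ Subgroup.closure (gens x y) := by
  obtain ⟨C, hC, hCfix⟩ := mem_homeoC_iff.mp hf
  have hfxy : f x < f y := hm hxy
  set c : ℝ := (max x (f x) + min y (f y)) / 2 with hcdef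
  have hMm : max x (f x) < min y (f y) := max_lt (lt_min hxy h2) (lt_min h1 hfxy)
  have hMc : max x (f x) < c := by rw [hcdef]; linarith
  have hcm : c < min y (f y) := by rw [hcdef]; linarith
  have hxc : x < c := lt_of_le_of_lt (le_max_left _ _) hMc
  have hcy : c < y := lt_of_lt_of_le hcm (min_le_left _ _)
  set m : ℝ := f.symm c with hmdef
  have hfm : f m = c := f.apply_symm_apply c
  have hxm : x < m := by
    apply hm.lt_iff_lt.mp
    rw [hfm]
    exact lt_of_le_of_lt (le_max_right _ _) hMc
  have hmy : m < y := by
    apply hm.lt_iff_lt.mp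
    rw [hfm]
    exact lt_of_lt_of_le hcm (min_le_right _ _)
  set c' : ℝ := (max m c + y) / 2 with hc'def
  have hMc' : max m c < y := max_lt hmy hcy
  have hmc' : m < c' := by
    have := le_max_left m c
    rw [hc'def]; linarith
  have hcc' : c < c' := by
    have := le_max_right m c
    rw [hc'def]; linarith
  have hc'y : c' < y := by
    rw [hc'def]; linarith
  have hfmc' : f m < c' := by rw [hfm]; exact hcc'
  set h₁ : ℝ ≃ₜ ℝ := mkHomeo (interp (⇑f) m c')
    (interp_strictMono hmc' hm hfmc') (interp_surjective hmc' hm f.surjective hfmc')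
    with hh₁def
  have hh₁ : ∀ t : ℝ, h₁ t = interp (⇑f) m c' t := fun t => rfl
  have h₁mem : h₁ ∈ HomeoC := by
    refine ⟨C ∪ Icc m c', hC.union isCompact_Icc, fun t ht => ?_⟩
    rw [hh₁ t]
    rcases le_or_gt t m with htm | htm
    · rw [interp_of_le htm]
      exact hCfix t (fun h => ht (Or.inl h))
    · have htc' : c' < t := by
        by_contra h
        push_neg at h
        exact ht (Or.inr ⟨htm.le, h⟩)
      exact interp_of_ge hmc' hfmc' htc'.le
  set h₂ : ℝ ≃ₜ ℝ := f * h₁⁻¹ with hh₂def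
  have h₂mem : h₂ ∈ HomeoC := mul_mem hf (inv_mem h₁mem)
  have h₂fix : ∀ t ∈ Iio c, h₂ t = t := by
    intro t ht
    have hkey : h₁ (f.symm t) = t := by
      have hle : f.symm t ≤ m := by
        apply hm.le_iff_le.mp
        rw [hfm, f.apply_symm_apply]
        exact le_of_lt ht
      rw [hh₁, interp_of_le hle, f.apply_symm_apply]
    have h3 : h₁.symm t = f.symm t := by
      conv_lhs => rw [← hkey]
      exact h₁.symm_apply_apply _
    show f (h₁.symm t) = t
    rw [h3, f.apply_symm_apply]
  have hprod : (⟨f, hf⟩ : HomeoC) = ⟨h₂, h₂mem⟩ * ⟨h₁, h₁mem⟩ := by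
    apply Subtype.ext
    show f = h₂ * h₁
    rw [hh₂def, inv_mul_cancel_right]
  rw [hprod]
  refine mul_mem (Subgroup.subset_closure ?_) (Subgroup.subset_closure ?_)
  · exact mem_gens_left isOpen_Iio hxc h₂fix
  · refine mem_gens_right isOpen_Ioi hc'y fun t ht => ?_
    rw [hh₁]
    exact interp_of_ge hmc' hfmc' (le_of_lt ht)

theorem main {x y : ℝ} (hxy : x < y) (f : HomeoC) : f ∈ Subgroup.closure (gens x y) := by
  obtain ⟨f, hf⟩ := f
  have hm : StrictMono ⇑f := strictMono_of_mem hf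
  rcases lt_or_ge (f x) y with h1 | h1
  · rcases lt_or_ge x (f y) with h2 | h2
    · exact step1 hxy f hf hm h1 h2
    · -- case f y ≤ x : conjugate by an element of G_y raising f y into (x, y)
      set c' : ℝ := (x + y) / 2 with hc'def
      have hxc' : x < c' := by rw [hc'def]; linarith
      have hc'y : c' < y := by rw [hc'def]; linarith
      set u : ℝ := f y with hudef
      set p : ℝ := f y - 1 with hpdef
      have hpu : p < u := by rw [hpdef, hudef]; linarith
      have huc' : u < c' := by rw [hudef]; linarith
      set s : ℝ := (c' - p) / (u - p) with hsdef
      have hup1 : u - p = 1 := by rw [hudef, hpdef]; ring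
      have hs1 : 1 < s := by
        rw [hsdef, hup1, div_one]
        linarith
      have hru : ramp p s u = c' := by
        rw [ramp_of_ge hs1.le hpu.le, hsdef, hup1, div_one]
        ring
      set q : ℝ := (c' + y) / 2 with hqdef
      have hc'q : c' < q := by rw [hqdef]; linarith
      have hqy : q < y := by rw [hqdef]; linarith
      have huq : u < q := by linarith
      have hrq : ramp p s u < q := by rw [hru]; exact hc'q
      have hrm : StrictMono (ramp p s) := ramp_strictMono (by linarith)
      set g : ℝ ≃ₜ ℝ := mkHomeo (interp (ramp p s) u q)
        (interp_strictMono huq hrm hrq)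
        (interp_surjective huq hrm (ramp_surjective hs1.le) hrq) with hgdef
      have hg : ∀ t : ℝ, g t = interp (ramp p s) u q t := fun t => rfl
      have hgm : StrictMono ⇑g := interp_strictMono huq hrm hrq
      have hgfix : ∀ t ∈ Ioi q, g t = t := by
        intro t ht
        rw [hg]
        exact interp_of_ge huq hrq (le_of_lt ht)
      have hgmem : g ∈ HomeoC := by
        refine ⟨Icc p q, isCompact_Icc, fun t ht => ?_⟩
        rw [hg]
        rcases le_or_gt t u with htu | htu
        · rw [interp_of_le htu]
          apply ramp_of_le hs1.le
          by_contra h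
          push_neg at h
          exact ht ⟨h.le, by linarith⟩
        · have : q < t := by
            by_contra h
            push_neg at h
            exact ht ⟨by linarith, h⟩
          exact interp_of_ge huq hrq this.le
      have hgfy : g (f y) = c' := by
        rw [hg, interp_of_le (le_refl u), hru]
      set f' : ℝ ≃ₜ ℝ := g * f with hf'def
      have hf'mem : f' ∈ HomeoC := mul_mem hgmem hf
      have hf'm : StrictMono ⇑f' := fun a b hab => hgm (hm hab)
      have hf'y : f' y = c' := hgfy
      have hf'x : f' x < c' := by
        show g (f x) < c'
        rw [← hgfy]
        exact hgm (hm hxy)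
      have hstep := step1 hxy f' hf'mem hf'm (by linarith) (by rw [hf'y]; exact hxc')
      have hprod : (⟨f, hf⟩ : HomeoC) = (⟨g, hgmem⟩ : HomeoC)⁻¹ * ⟨f', hf'mem⟩ := by
        apply Subtype.ext
        show f = g⁻¹ * f'
        rw [hf'def, inv_mul_cancel_left]
      rw [hprod]
      exact mul_mem (inv_mem (Subgroup.subset_closure
        (mem_gens_right isOpen_Ioi hqy hgfix))) hstep
  · -- case y ≤ f x : conjugate by an element of G_x raising c to f x
    set c : ℝ := (x + y) / 2 with hcdef
    have hxc : x < c := by rw [hcdef]; linarith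
    have hcy : c < y := by rw [hcdef]; linarith
    set p : ℝ := (x + c) / 2 with hpdef
    have hxp : x < p := by rw [hpdef]; linarith
    have hpc : p < c := by rw [hpdef]; linarith
    have hcfx : c < f x := by linarith
    set s : ℝ := (f x - p) / (c - p) with hsdef
    have hs1 : 1 < s := by
      rw [hsdef]
      rw [one_lt_div (by linarith)]
      linarith
    have hrc : ramp p s c = f x := by
      rw [ramp_of_ge hs1.le hpc.le, hsdef, div_mul_cancel₀ _ (show c - p ≠ 0 by linarith)]
      ring
    set q : ℝ := f x + 1 with hqdef
    have hcq : c < q := by rw [hqdef]; linarith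
    have hrq : ramp p s c < q := by rw [hrc, hqdef]; linarith
    have hrm : StrictMono (ramp p s) := ramp_strictMono (by linarith)
    set g : ℝ ≃ₜ ℝ := mkHomeo (interp (ramp p s) c q)
      (interp_strictMono hcq hrm hrq)
      (interp_surjective hcq hrm (ramp_surjective hs1.le) hrq) with hgdef
    have hg : ∀ t : ℝ, g t = interp (ramp p s) c q t := fun t => rfl
    have hgm : StrictMono ⇑g := interp_strictMono hcq hrm hrq
    have hgfix : ∀ t ∈ Iio p, g t = t := by
      intro t ht
      rw [hg, interp_of_le (by linarith [mem_Iio.mp ht] : t ≤ c)]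
      exact ramp_of_le hs1.le (le_of_lt ht)
    have hgmem : g ∈ HomeoC := by
      refine ⟨Icc p q, isCompact_Icc, fun t ht => ?_⟩
      rw [hg]
      rcases le_or_gt t c with htc | htc
      · rw [interp_of_le htc]
        apply ramp_of_le hs1.le
        by_contra h
        push_neg at h
        exact ht ⟨h.le, by linarith⟩
      · have : q < t := by
          by_contra h
          push_neg at h
          exact ht ⟨by linarith, h⟩
        exact interp_of_ge hcq hrq this.le
    have hgc : g c = f x := by
      rw [hg, interp_of_le (le_refl c), hrc]
    set f' : ℝ ≃ₜ ℝ := g⁻¹ * f with hf'def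
    have hf'mem : f' ∈ HomeoC := mul_mem (inv_mem hgmem) hf
    have hgsymm : StrictMono ⇑g.symm := symm_strictMono hgm
    have hf'm : StrictMono ⇑f' := fun a b hab => hgsymm (hm hab)
    have hf'x : f' x = c := by
      show g.symm (f x) = c
      rw [← hgc, g.symm_apply_apply]
    have hf'y : c < f' y := by
      show c < g.symm (f y)
      have h4 : g.symm (f x) = c := by rw [← hgc, g.symm_apply_apply]
      rw [← h4]
      exact hgsymm (hm hxy)
    have hstep := step1 hxy f' hf'mem hf'm (by rw [hf'x]; exact hcy) (lt_trans hxc hf'y)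
    have hprod : (⟨f, hf⟩ : HomeoC) = (⟨g, hgmem⟩ : HomeoC) * ⟨f', hf'mem⟩ := by
      apply Subtype.ext
      show f = g * f'
      rw [hf'def, mul_inv_cancel_left]
    rw [hprod]
    exact mul_mem (Subgroup.subset_closure (mem_gens_left isOpen_Iio hxp hgfix)) hstep

end Stmt9Aux

/-- For distinct points `x ≠ y` of the line, the subgroups `G_x` and `G_y` of compactly
supported homeomorphisms fixing a neighbourhood of `x`, resp. of `y`, generate the whole
group `Homeo_c(ℝ)`. -/
theorem stmt9 (x y : ℝ) (hxy : x ≠ y) :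
    Subgroup.closure ({f : HomeoC | FixesNbhd (f : ℝ ≃ₜ ℝ) {x}} ∪
      {f : HomeoC | FixesNbhd (f : ℝ ≃ₜ ℝ) {y}}) = ⊤ := by
  rw [eq_top_iff]
  intro f _
  rcases hxy.lt_or_gt with h | h
  · exact Stmt9Aux.main h f
  · have := Stmt9Aux.main h f
    unfold Stmt9Aux.gens at this
    rwa [Set.union_comm] at this
end
end

section
/- Any homeomorphism of the circle supported in the interior of a proper closed interval $I \subsetneq \mathbb{S}^1$ can be written as a commutator $f = f_1 f_2 f_1^{-1} f_2^{-1}$ where $f_1, f_2$ are homeomorphisms of the circle supported in $I$. -/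
/-!
Lift `f` to an order automorphism `T` of `ℝ` that is the identity outside a compact interval
`[c, d] ⊂ (a, b)`, and take an order automorphism `G` of `ℝ`, the identity outside `(a, b)`, with
`G d < c`, so that the intervals `Gⁿ [c, d]` are pairwise disjoint and lie in `(a, b)`. The infinite
product `Φ = ∏ₙ Gⁿ T G⁻ⁿ` of these disjointly supported conjugates is again an order automorphism,
and `G Φ G⁻¹` is the same product without its factor `T`, so `⁅Φ, G⁆ = Φ (G Φ G⁻¹)⁻¹ = T`.
Order automorphisms of `ℝ` fixing the complement of `(a, a + 1)` descend homomorphically to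
homeomorphisms of the circle, which turns this identity into one for `f`.
-/

noncomputable section

open Set Function
open scoped commutatorElement

section RigidStabilizer

variable {α : Type*} [Preorder α]

def rigidStabilizer (s : Set α) : Subgroup (α ≃o α) where
  carrier := {g | ∀ x ∉ s, g x = x}
  mul_mem' {g h} hg hh x hx := by rw [RelIso.mul_apply, hh x hx, hg x hx]
  one_mem' _ _ := rfl
  inv_mem' {g} hg x hx := g.symm_apply_eq.mpr (hg x hx).symm

variable {s t : Set α} {g : α ≃o α}

lemma rigidStabilizer_mono (h : s ⊆ t) : rigidStabilizer s ≤ rigidStabilizer t :=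
  fun _ hg x hx => hg x fun hxs => hx (h hxs)

lemma mapsTo_of_mem_rigidStabilizer (hg : g ∈ rigidStabilizer s) : MapsTo g s s := by
  intro x hx
  by_contra hgx
  rw [g.injective (hg _ hgx)] at hgx
  exact hgx hx

lemma iUnion_pow_image_subset_of_mem_rigidStabilizer (hg : g ∈ rigidStabilizer t)
    (hst : s ⊆ t) : ⋃ n : ℕ, (g ^ n) '' s ⊆ t :=
  iUnion_subset fun n =>
    ((mapsTo_of_mem_rigidStabilizer (pow_mem hg n)).mono_left hst).image_subset

end RigidStabilizer

section Piecewise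

variable {α ι : Type*} [LinearOrder α]

lemma Disjoint.lt_of_ordConnected {s t : Set α} [s.OrdConnected] [t.OrdConnected]
    (hst : Disjoint s t) {x y u v : α} (hx : x ∈ s) (hy : y ∈ t) (hxy : x < y)
    (hu : u ∈ s) (hv : v ∈ t) : u < v := by
  by_contra! hvu
  rcases le_or_gt y u with hyu | huy
  · exact disjoint_left.1 hst (Set.Icc_subset s hx hu ⟨hxy.le, hyu⟩) hy
  · exact disjoint_left.1 hst hu (Set.Icc_subset t hv hy ⟨hvu, huy.le⟩)

lemma strictMono_of_mapsTo_of_eqOn_compl {P : ι → Set α} [∀ i, (P i).OrdConnected]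
    (hP : Pairwise (Disjoint on P)) {f : α → α} (hmaps : ∀ i, MapsTo f (P i) (P i))
    (hmono : ∀ i, StrictMonoOn f (P i)) (hfix : ∀ x ∉ ⋃ i, P i, f x = x) :
    StrictMono f := by
  intro x y hxy
  by_cases hx : x ∈ ⋃ i, P i <;> by_cases hy : y ∈ ⋃ i, P i
  · obtain ⟨i, hxi⟩ := mem_iUnion.1 hx
    obtain ⟨j, hyj⟩ := mem_iUnion.1 hy
    obtain rfl | hij := eq_or_ne i j
    · exact hmono i hxi hyj hxy
    · exact (hP hij).lt_of_ordConnected hxi hyj hxy (hmaps i hxi) (hmaps j hyj)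
  · obtain ⟨i, hxi⟩ := mem_iUnion.1 hx
    rw [hfix y hy]
    by_contra! hyf
    exact hy (mem_iUnion.2 ⟨i, Set.Icc_subset (P i) hxi (hmaps i hxi) ⟨hxy.le, hyf⟩⟩)
  · obtain ⟨j, hyj⟩ := mem_iUnion.1 hy
    rw [hfix x hx]
    by_contra! hfx
    exact hx (mem_iUnion.2 ⟨j, Set.Icc_subset (P j) (hmaps j hyj) hyj ⟨hfx, hxy.le⟩⟩)
  · rwa [hfix x hx, hfix y hy]

end Piecewise

section Swindle

variable {α : Type*} [LinearOrder α] (G T : α ≃o α) (s : Set α)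

lemma OrderIso.pow_succ_apply (n : ℕ) (x : α) : (G ^ (n + 1)) x = G ((G ^ n) x) := by
  rw [pow_succ', RelIso.mul_apply]

open Classical in
def swindle (x : α) : α :=
  if h : ∃ n : ℕ, x ∈ (G ^ n) '' s then (G ^ h.choose) (T ((G ^ h.choose).symm x)) else x

variable {G T s}

lemma swindle_apply_of_mem (hdisj : Pairwise (Disjoint on fun n : ℕ => (G ^ n) '' s)) {n : ℕ}
    {x : α} (hx : x ∈ (G ^ n) '' s) : swindle G T s x = (G ^ n) (T ((G ^ n).symm x)) := by
  have h : ∃ n : ℕ, x ∈ (G ^ n) '' s := ⟨n, hx⟩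
  rw [swindle, dif_pos h, hdisj.eq (not_disjoint_iff.2 ⟨x, h.choose_spec, hx⟩)]

lemma swindle_apply_of_notMem {x : α} (hx : x ∉ ⋃ n : ℕ, (G ^ n) '' s) :
    swindle G T s x = x :=
  dif_neg fun ⟨n, hn⟩ => hx (mem_iUnion.2 ⟨n, hn⟩)

lemma swindle_pow_apply (hdisj : Pairwise (Disjoint on fun n : ℕ => (G ^ n) '' s)) {n : ℕ} {z : α}
    (hz : z ∈ s) : swindle G T s ((G ^ n) z) = (G ^ n) (T z) := by
  rw [swindle_apply_of_mem hdisj (mem_image_of_mem _ hz), OrderIso.symm_apply_apply]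

variable (hdisj : Pairwise (Disjoint on fun n : ℕ => (G ^ n) '' s)) (hT : T ∈ rigidStabilizer s)
include hdisj hT

lemma mapsTo_swindle (n : ℕ) : MapsTo (swindle G T s) ((G ^ n) '' s) ((G ^ n) '' s) := by
  rintro _ ⟨z, hz, rfl⟩
  rw [swindle_pow_apply hdisj hz]
  exact mem_image_of_mem _ (mapsTo_of_mem_rigidStabilizer hT hz)

lemma swindle_inv_swindle (x : α) : swindle G T⁻¹ s (swindle G T s x) = x := by
  by_cases hx : x ∈ ⋃ n : ℕ, (G ^ n) '' s
  · obtain ⟨n, z, hz, rfl⟩ := mem_iUnion.1 hx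
    rw [swindle_pow_apply hdisj hz, swindle_pow_apply hdisj (mapsTo_of_mem_rigidStabilizer hT hz),
      RelIso.inv_apply_self]
  · rw [swindle_apply_of_notMem hx, swindle_apply_of_notMem hx]

lemma strictMono_swindle [s.OrdConnected] : StrictMono (swindle G T s) := by
  refine strictMono_of_mapsTo_of_eqOn_compl hdisj (mapsTo_swindle hdisj hT)
    (fun n x hx y hy hxy => ?_) fun x hx => swindle_apply_of_notMem hx
  rw [swindle_apply_of_mem hdisj hx, swindle_apply_of_mem hdisj hy]
  exact (G ^ n).strictMono (T.strictMono ((G ^ n).symm.strictMono hxy))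

lemma swindle_apply_apply (x : α) : swindle G T s (G x) = T (G (swindle G T s x)) := by
  by_cases hx : x ∈ ⋃ n : ℕ, (G ^ n) '' s
  · obtain ⟨n, z, hz, rfl⟩ := mem_iUnion.1 hx
    have hGz : (G ^ (n + 1)) (T z) ∉ s := fun h => n.succ_ne_zero <| hdisj.eq <| not_disjoint_iff.2
      ⟨_, mem_image_of_mem _ (mapsTo_of_mem_rigidStabilizer hT hz), by simpa using h⟩
    rw [← OrderIso.pow_succ_apply, swindle_pow_apply hdisj hz, swindle_pow_apply hdisj hz,
      ← OrderIso.pow_succ_apply, hT _ hGz]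
  · rw [swindle_apply_of_notMem hx]
    by_cases hGx : G x ∈ s
    · simpa using swindle_pow_apply (T := T) hdisj (n := 0) hGx
    · rw [hT _ hGx, swindle_apply_of_notMem]
      simp only [mem_iUnion, not_exists]
      rintro (_ | n) ⟨z, hz, hGz⟩
      · exact hGx (by simpa [← hGz] using hz)
      · rw [OrderIso.pow_succ_apply] at hGz
        exact hx (mem_iUnion.2 ⟨n, z, hz, G.injective hGz⟩)

theorem exists_mem_rigidStabilizer_commutatorElement_eq [s.OrdConnected] :
    ∃ Φ ∈ rigidStabilizer (⋃ n : ℕ, (G ^ n) '' s), ⁅Φ, G⁆ = T := by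
  have hT' : T⁻¹ ∈ rigidStabilizer s := inv_mem hT
  refine ⟨StrictMono.orderIsoOfRightInverse _ (strictMono_swindle hdisj hT) (swindle G T⁻¹ s)
    fun x => by simpa using swindle_inv_swindle hdisj hT' x,
    fun x hx => swindle_apply_of_notMem hx, ?_⟩
  rw [commutatorElement_def, mul_inv_eq_iff_eq_mul, mul_inv_eq_iff_eq_mul]
  ext x
  exact swindle_apply_apply hdisj hT x

end Swindle

section Wandering

variable {α : Type*} [LinearOrder α] {G : α ≃o α} {c d : α}

lemma pow_succ_apply_lt (hcd : c ≤ d) (hGd : G d < c) (n : ℕ) : (G ^ (n + 1)) d < c := by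
  induction n with
  | zero => simpa using hGd
  | succ n ih =>
    rw [OrderIso.pow_succ_apply]
    exact (G.strictMono (ih.trans_le hcd)).trans hGd

lemma pairwise_disjoint_pow_image_Icc (hcd : c ≤ d) (hGd : G d < c) :
    Pairwise (Disjoint on fun n : ℕ => (G ^ n) '' Icc c d) := by
  refine (pairwise_disjoint_on _).2 fun m n hmn => ?_
  obtain ⟨k, rfl⟩ := Nat.exists_eq_add_of_lt hmn
  have hlt : (G ^ (m + k + 1)) d < (G ^ m) c := by
    rw [add_assoc, pow_add, RelIso.mul_apply]
    exact (G ^ m).strictMono (pow_succ_apply_lt hcd hGd k)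
  simp only [OrderIso.image_Icc]
  exact disjoint_left.2 fun x hxm hxn => (hxn.2.trans_lt hlt).not_ge hxm.1

end Wandering

lemma exists_mem_rigidStabilizer_Ioo_apply_eq {a b p q : ℝ} (hap : a < p) (hpq : p < q)
    (hqb : q < b) : ∃ G : ℝ ≃o ℝ, G ∈ rigidStabilizer (Ioo a b) ∧ G q = p := by
  set k₁ := (p - a) / (q - a)
  set k₂ := (b - p) / (b - q)
  have hk₁ : 0 < k₁ ∧ k₁ < 1 :=
    ⟨div_pos (by linarith) (by linarith), (div_lt_one (by linarith)).2 (by linarith)⟩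
  have hk₂ : 1 < k₂ := (one_lt_div (by linarith)).2 (by linarith)
  have hk₁q : (q - a) * k₁ = p - a := mul_div_cancel₀ _ (by linarith)
  have hk₂q : (b - q) * k₂ = b - p := mul_div_cancel₀ _ (by linarith)
  -- the piecewise linear map through `(a, a)`, `(q, p)`, `(b, b)`, extended by the identity
  set g : ℝ → ℝ := fun x => min x (max (a + (x - a) * k₁) (p + (x - q) * k₂))
  have hmono : StrictMono g := fun x y hxy =>
    min_lt_min hxy (max_lt_max (by nlinarith) (by nlinarith))
  have hfix : ∀ x ∉ Ioo a b, g x = x := by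
    intro x hx
    refine min_eq_left ?_
    rcases le_or_gt x a with hxa | hxa
    · exact le_max_of_le_left
        (by nlinarith [mul_nonneg (sub_nonneg.2 hxa) (sub_nonneg.2 hk₁.2.le)])
    · have hbx : b ≤ x := not_lt.1 fun h => hx ⟨hxa, h⟩
      exact le_max_of_le_right
        (by nlinarith [mul_le_mul_of_nonneg_right (sub_le_sub_right hbx q) (sub_nonneg.2 hk₂.le)])
  have hq : g q = p := by
    simp [g, show a + (q - a) * k₁ = p by linarith, hpq.le]
  have hsurj : Surjective g := by
    refine Continuous.surjective (by fun_prop) (Filter.tendsto_id.congr' ?_)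
      (Filter.tendsto_id.congr' ?_)
    · filter_upwards [Filter.eventually_ge_atTop b] with x hx
      exact (hfix x fun h => h.2.not_ge hx).symm
    · filter_upwards [Filter.eventually_le_atBot a] with x hx
      exact (hfix x fun h => h.1.not_ge hx).symm
  exact ⟨StrictMono.orderIsoOfSurjective g hmono hsurj, hfix, hq⟩

lemma continuous_pr : Continuous pr := AddCircle.continuous_mk' 1

lemma exists_mem_Ico_pr_eq (a : ℝ) (θ : S1) : ∃ x ∈ Ico a (a + 1), pr x = θ :=
  (AddCircle.coe_image_Ico_eq 1 a).ge (mem_univ θ)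

lemma injOn_pr_Ico (a : ℝ) : InjOn pr (Ico a (a + 1)) := fun _ hx _ hy h =>
  (AddCircle.coe_eq_coe_iff_of_mem_Ico hx hy).1 h

section Descend

variable {a : ℝ}

lemma mapsTo_Ico_of_mem_rigidStabilizer {H : ℝ ≃o ℝ}
    (hH : H ∈ rigidStabilizer (Ioo a (a + 1))) :
    MapsTo H (Ico a (a + 1)) (Ico a (a + 1)) := fun x hx =>
  ⟨hH a (by simp) ▸ H.monotone hx.1, hH (a + 1) (by simp) ▸ H.strictMono hx.2⟩

def descend (a : ℝ) (H : ℝ ≃o ℝ) : S1 → S1 := AddCircle.liftIco 1 a (pr ∘ H)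

lemma descend_pr (H : ℝ ≃o ℝ) {x : ℝ} (hx : x ∈ Ico a (a + 1)) :
    descend a H (pr x) = pr (H x) :=
  AddCircle.liftIco_coe_apply hx

lemma descend_mul {H K : ℝ ≃o ℝ} (hK : K ∈ rigidStabilizer (Ioo a (a + 1))) :
    descend a (H * K) = descend a H ∘ descend a K := by
  ext θ
  obtain ⟨x, hx, rfl⟩ := exists_mem_Ico_pr_eq a θ
  rw [comp_apply, descend_pr _ hx, descend_pr _ hx,
    descend_pr _ (mapsTo_Ico_of_mem_rigidStabilizer hK hx), RelIso.mul_apply]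

lemma descend_one : descend a 1 = id := by
  ext θ
  obtain ⟨x, hx, rfl⟩ := exists_mem_Ico_pr_eq a θ
  rw [descend_pr _ hx, RelIso.one_apply, id]

lemma continuous_descend {H : ℝ ≃o ℝ} (hH : H ∈ rigidStabilizer (Ioo a (a + 1))) :
    Continuous (descend a H) :=
  AddCircle.liftIco_continuous
    (by simp only [comp_apply, hH a (by simp), hH (a + 1) (by simp)]
        exact (AddCircle.coe_add_period 1 a).symm)
    (continuous_pr.comp H.continuous).continuousOn

def descendHom (a : ℝ) : rigidStabilizer (Ioo a (a + 1)) →* (S1 ≃ₜ S1) :=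
  MonoidHom.mk' (fun H =>
    { toFun := descend a H
      invFun := descend a H⁻¹
      left_inv θ := by
        rw [← comp_apply (f := descend a _), ← descend_mul H.2, inv_mul_cancel, descend_one, id]
      right_inv θ := by
        rw [← comp_apply (f := descend a _), ← descend_mul (inv_mem H.2), mul_inv_cancel,
          descend_one, id]
      continuous_toFun := continuous_descend H.2
      continuous_invFun := continuous_descend (inv_mem H.2) })
    fun H K => Homeomorph.ext fun θ => congrFun (descend_mul K.2) θ

lemma descendHom_pr (H : rigidStabilizer (Ioo a (a + 1))) {x : ℝ} (hx : x ∈ Ico a (a + 1)) :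
    descendHom a H (pr x) = pr ((H : ℝ ≃o ℝ) x) :=
  descend_pr _ hx

lemma eq_descendHom_of_pr_apply {f : S1 ≃ₜ S1} (H : rigidStabilizer (Ioo a (a + 1)))
    (hH : ∀ x ∈ Ico a (a + 1), pr ((H : ℝ ≃o ℝ) x) = f (pr x)) : f = descendHom a H := by
  ext θ
  obtain ⟨x, hx, rfl⟩ := exists_mem_Ico_pr_eq a θ
  rw [descendHom_pr H hx, hH x hx]

lemma closure_setOf_descendHom_apply_ne_subset {b : ℝ} (H : rigidStabilizer (Ioo a (a + 1)))
    (hH : (H : ℝ ≃o ℝ) ∈ rigidStabilizer (Ioo a b)) :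
    closure {θ | descendHom a H θ ≠ θ} ⊆ pr '' Icc a b := by
  refine closure_minimal ?_ (isCompact_Icc.image continuous_pr).isClosed
  intro θ hθ
  obtain ⟨x, hx, rfl⟩ := exists_mem_Ico_pr_eq a θ
  by_cases hxab : x ∈ Ioo a b
  · exact mem_image_of_mem _ (Ioo_subset_Icc_self hxab)
  · exact absurd (by rw [descendHom_pr H hx, hH x hxab]) hθ

end Descend

lemma exists_Icc_subset_of_isCompact_subset_Ioo {a b : ℝ} {K : Set ℝ} (hab : a < b)
    (hK : IsCompact K) (hKab : K ⊆ Ioo a b) :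
    ∃ c d, a < c ∧ c ≤ d ∧ d < b ∧ K ⊆ Icc c d := by
  rcases K.eq_empty_or_nonempty with rfl | hne
  · exact ⟨(a + b) / 2, (a + b) / 2, by linarith, le_rfl, by linarith, empty_subset _⟩
  · obtain ⟨c, hc⟩ := hK.exists_isLeast hne
    obtain ⟨d, hd⟩ := hK.exists_isGreatest hne
    exact ⟨c, d, (hKab hc.1).1, hc.2 hd.1, (hKab hd.1).2, fun x hx => ⟨hc.2 hx, hd.2 hx⟩⟩

lemma exists_Icc_subset_of_isClosed_subset_image_Ioo {a b : ℝ} {K : Set S1} (hab : a < b)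
    (hb : b < a + 1) (hK : IsClosed K) (hKab : K ⊆ pr '' Ioo a b) :
    ∃ c d, a < c ∧ c ≤ d ∧ d < b ∧ K ⊆ pr '' Icc c d := by
  have hIcc : Icc a b ⊆ Ico a (a + 1) := Icc_subset_Ico_right hb
  have hsub : Icc a b ∩ pr ⁻¹' K ⊆ Ioo a b := by
    rintro x ⟨hx, hxK⟩
    obtain ⟨y, hy, hyx⟩ := hKab hxK
    exact injOn_pr_Ico a (hIcc (Ioo_subset_Icc_self hy)) (hIcc hx) hyx ▸ hy
  obtain ⟨c, d, hac, hcd, hdb, hK'⟩ := exists_Icc_subset_of_isCompact_subset_Ioo hab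
    (isCompact_Icc.inter_right (hK.preimage continuous_pr)) hsub
  refine ⟨c, d, hac, hcd, hdb, fun θ hθ => ?_⟩
  obtain ⟨y, hy, rfl⟩ := hKab hθ
  exact mem_image_of_mem _ (hK' ⟨Ioo_subset_Icc_self hy, hθ⟩)

section Lift

variable {a c d : ℝ} {f : S1 ≃ₜ S1}

local notation "chart" => AddCircle.openPartialHomeomorphCoe 1 a

def liftFun (a : ℝ) (f : S1 ≃ₜ S1) (x : ℝ) : ℝ :=
  if x ∈ Ioo a (a + 1) then (AddCircle.openPartialHomeomorphCoe 1 a).symm (f (pr x)) else x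

lemma setOf_symm_apply_ne (f : S1 ≃ₜ S1) : {θ | f.symm θ ≠ θ} = {θ | f θ ≠ θ} := by
  ext θ
  exact not_congr (f.symm_apply_eq.trans eq_comm)

variable (hac : a < c) (hda : d < a + 1) (hf : {θ | f θ ≠ θ} ⊆ pr '' Icc c d)
include hac hda hf

lemma apply_pr_of_notMem_Icc {x : ℝ} (hx : x ∈ Ico a (a + 1)) (hxcd : x ∉ Icc c d) :
    f (pr x) = pr x := by
  by_contra h
  obtain ⟨y, hy, hyx⟩ := hf h
  exact hxcd (injOn_pr_Ico a ⟨hac.le.trans hy.1, hy.2.trans_lt hda⟩ hx hyx ▸ hy)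

lemma apply_pr_mem_target {x : ℝ} (hx : x ∈ Ioo a (a + 1)) : f (pr x) ∈ (chart).target := by
  have hfa : f (pr a) = pr a :=
    apply_pr_of_notMem_Icc hac hda hf ⟨le_rfl, by linarith⟩ fun h => h.1.not_gt hac
  rw [AddCircle.openPartialHomeomorphCoe_target, mem_compl_singleton_iff]
  change f (pr x) ≠ pr a
  rw [← hfa, ne_eq, f.injective.eq_iff]
  exact fun h => hx.1.ne' (injOn_pr_Ico a (Ioo_subset_Ico_self hx) ⟨le_rfl, by linarith⟩ h)

lemma liftFun_eq_self {x : ℝ} (hx : x ∉ Icc c d) : liftFun a f x = x := by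
  by_cases hxa : x ∈ Ioo a (a + 1)
  · rw [liftFun, if_pos hxa, apply_pr_of_notMem_Icc hac hda hf (Ioo_subset_Ico_self hxa) hx]
    exact (chart).left_inv hxa
  · exact if_neg hxa

lemma pr_liftFun {x : ℝ} (hx : x ∈ Ico a (a + 1)) : pr (liftFun a f x) = f (pr x) := by
  by_cases hxa : x ∈ Ioo a (a + 1)
  · rw [liftFun, if_pos hxa]
    exact (chart).right_inv (apply_pr_mem_target hac hda hf hxa)
  · obtain rfl : x = a := le_antisymm (not_lt.1 fun h => hxa ⟨h, hx.2⟩) hx.1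
    rw [liftFun_eq_self hac hda hf fun h => h.1.not_gt hac,
      apply_pr_of_notMem_Icc hac hda hf hx fun h => h.1.not_gt hac]

lemma liftFun_symm_liftFun (x : ℝ) : liftFun a f.symm (liftFun a f x) = x := by
  by_cases hx : x ∈ Ioo a (a + 1)
  · have hmem := apply_pr_mem_target hac hda hf hx
    have hpr : pr ((chart).symm (f (pr x))) = f (pr x) := (chart).right_inv hmem
    have h : liftFun a f x = (chart).symm (f (pr x)) := if_pos hx
    rw [h, liftFun, if_pos (show _ ∈ Ioo a (a + 1) from (chart).map_target hmem), hpr,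
      f.symm_apply_apply]
    exact (chart).left_inv hx
  · have h : liftFun a f x = x := if_neg hx
    rw [h]
    exact if_neg hx

lemma continuous_liftFun : Continuous (liftFun a f) := by
  refine continuous_iff_continuousAt.2 fun x => ?_
  by_cases hx : x ∈ Ioo a (a + 1)
  · have : ContinuousAt (fun y => (chart).symm (f (pr y))) x :=
      ((chart).continuousAt_symm (apply_pr_mem_target hac hda hf hx)).comp (x := x)
        (f.continuous.comp continuous_pr).continuousAt
    refine this.congr ?_
    filter_upwards [isOpen_Ioo.mem_nhds hx] with y hy using (if_pos hy).symm
  · have hxcd : x ∉ Icc c d := fun h => hx ⟨hac.trans_le h.1, h.2.trans_lt hda⟩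
    refine continuousAt_id.congr ?_
    filter_upwards [isClosed_Icc.isOpen_compl.mem_nhds hxcd] with y hy
    exact (liftFun_eq_self hac hda hf hy).symm

lemma strictMono_liftFun : StrictMono (liftFun a f) := by
  -- orientation is not assumed: it is forced by `f` fixing a neighbourhood of `pr a`
  refine (continuous_liftFun hac hda hf).strictMonoOn_of_inj_rigidity
    (LeftInverse.injective (g := liftFun a f.symm) (liftFun_symm_liftFun hac hda hf))
    (sub_one_lt a) fun x hx y hy hxy => ?_
  rwa [liftFun_eq_self hac hda hf fun h => (hx.2.trans_lt hac).not_ge h.1,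
    liftFun_eq_self hac hda hf fun h => (hy.2.trans_lt hac).not_ge h.1]

theorem exists_lift_mem_rigidStabilizer :
    ∃ F : ℝ ≃o ℝ, F ∈ rigidStabilizer (Icc c d) ∧
      ∀ x ∈ Ico a (a + 1), pr (F x) = f (pr x) := by
  have hf' : {θ | f.symm θ ≠ θ} ⊆ pr '' Icc c d := setOf_symm_apply_ne f ▸ hf
  exact ⟨StrictMono.orderIsoOfRightInverse _ (strictMono_liftFun hac hda hf) (liftFun a f.symm)
    (liftFun_symm_liftFun hac hda hf'), fun x hx => liftFun_eq_self hac hda hf hx,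
    fun x hx => pr_liftFun hac hda hf hx⟩

end Lift

/-- Any homeomorphism of the circle supported in the interior of a proper closed interval
`I = pr([a,b])` (with `b - a < 1`) is a commutator `f = f₁ f₂ f₁⁻¹ f₂⁻¹` of two
homeomorphisms supported in `I`. -/
theorem stmt13 (a b : ℝ) (hab : a < b) (hlen : b - a < 1)
    (f : S1 ≃ₜ S1) (hsupp : closure {θ : S1 | f θ ≠ θ} ⊆ pr '' Set.Ioo a b) :
    ∃ f1 f2 : S1 ≃ₜ S1,
      closure {θ : S1 | f1 θ ≠ θ} ⊆ pr '' Set.Icc a b ∧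
      closure {θ : S1 | f2 θ ≠ θ} ⊆ pr '' Set.Icc a b ∧
      ∀ θ : S1, f θ = f1 (f2 (f1.symm (f2.symm θ))) := by
  have hb : b < a + 1 := by linarith
  obtain ⟨c, d, hac, hcd, hdb, hfcd⟩ :=
    exists_Icc_subset_of_isClosed_subset_image_Ioo hab hb isClosed_closure hsupp
  obtain ⟨T, hT, hTf⟩ :=
    exists_lift_mem_rigidStabilizer hac (hdb.trans hb) (subset_closure.trans hfcd)
  obtain ⟨G, hG, hGd⟩ := exists_mem_rigidStabilizer_Ioo_apply_eq (a := a) (p := (a + c) / 2)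
    (by linarith) (by linarith) hdb
  obtain ⟨Φ, hΦ, hΦG⟩ := exists_mem_rigidStabilizer_commutatorElement_eq
    (pairwise_disjoint_pow_image_Icc hcd (by rw [hGd]; linarith)) hT
  have hΦ' : Φ ∈ rigidStabilizer (Ioo a b) := rigidStabilizer_mono
    (iUnion_pow_image_subset_of_mem_rigidStabilizer hG (Icc_subset_Ioo hac hdb)) hΦ
  have hsub : rigidStabilizer (Ioo a b) ≤ rigidStabilizer (Ioo a (a + 1)) :=
    rigidStabilizer_mono (Ioo_subset_Ioo_right hb.le)
  let φ : rigidStabilizer (Ioo a (a + 1)) := ⟨Φ, hsub hΦ'⟩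
  let γ : rigidStabilizer (Ioo a (a + 1)) := ⟨G, hsub hG⟩
  have hf : f = ⁅descendHom a φ, descendHom a γ⁆ := by
    rw [← map_commutatorElement]
    exact eq_descendHom_of_pr_apply _ fun x hx => by rw [← hTf x hx, ← hΦG]; rfl
  exact ⟨_, _, closure_setOf_descendHom_apply_ne_subset φ hΦ',
    closure_setOf_descendHom_apply_ne_subset γ hG, fun θ => by rw [hf]; rfl⟩
end
end

section
/- Any non-trivial group morphism $\varphi : \mathrm{Homeo}_0(\mathbb{S}^1) \to \mathrm{Homeo}_0(\mathbb{S}^2)$ has exactly two global fixed points on the sphere, i.e. there exist exactly two points $N \neq S$ of $\mathbb{S}^2$ fixed by $\varphi(f)$ for every $f$. -/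
noncomputable section

/-- The 2-sphere. -/
abbrev S2 : Type := Metric.sphere (0 : EuclideanSpace ℝ (Fin 3)) 1

/-- Mann's proposition for the sphere: let `G` be (a group abstractly modelling)
`Homeo₀(S¹)`, assumed simple (hypothesis `hsimple`), with its rotation subgroup given by
the injective morphism `rot` from the circle group.  Let `φ : G → Homeo(S²)` be a
non-trivial morphism such that (Kerekjarto) the rotation action is standard: every
non-trivial rotation has fixed-point set exactly a pair `{N, S}` of poles, and such that
the elements commuting with some non-trivial finite-order rotation generate `G`.  Then the
action `φ` has exactly two global fixed points on the sphere. -/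
theorem stmt15 {G : Type} [Group G]
    (hsimple : ∀ N : Subgroup G, N.Normal → N = ⊥ ∨ N = ⊤)
    (rot : Multiplicative (AddCircle (1 : ℝ)) →* G) (hrot : Function.Injective rot)
    (φ : G →* (S2 ≃ₜ S2)) (hnt : φ ≠ 1)
    (hA : ∃ N S : S2, N ≠ S ∧ ∀ α : Multiplicative (AddCircle (1 : ℝ)), α ≠ 1 →
      {p : S2 | φ (rot α) p = p} = {N, S})
    (hB : Subgroup.closure {g : G | ∃ α : Multiplicative (AddCircle (1 : ℝ)), α ≠ 1 ∧
      (∃ n : ℕ, 0 < n ∧ α ^ n = 1) ∧ g * rot α = rot α * g} = ⊤) :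
    ∃ N S : S2, N ≠ S ∧ {p : S2 | ∀ g : G, φ g p = p} = {N, S} := by
  obtain ⟨N, S, hNS, hfix⟩ := hA
  -- the application of a product
  have hmul : ∀ a b : G, ∀ p : S2, φ (a * b) p = φ a (φ b p) := by
    intro a b p; rw [map_mul]; rfl
  have hinv : ∀ (g : G) (p q : S2), φ g p = q → φ g⁻¹ q = p := by
    intro g p q h
    rw [map_inv]
    show (φ g).symm q = p
    rw [← h, Homeomorph.symm_apply_apply]
  -- a nontrivial rotation
  have hhalf : ((1/2 : ℝ) : AddCircle (1 : ℝ)) ≠ 0 := by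
    intro h
    rw [AddCircle.coe_eq_zero_iff] at h
    obtain ⟨n, hn⟩ := h
    have h1 : (n : ℝ) = 1/2 := by simpa using hn
    have h2 : ((2 * n : ℤ) : ℝ) = 1 := by push_cast; linarith
    have h3 : (2 * n : ℤ) = 1 := by exact_mod_cast h2
    omega
  set α₀ : Multiplicative (AddCircle (1 : ℝ)) :=
    Multiplicative.ofAdd ((1/2 : ℝ) : AddCircle (1 : ℝ)) with hα₀def
  have hα₀ne : α₀ ≠ 1 := fun h => hhalf (congrArg Multiplicative.toAdd h)
  -- fixed points of nontrivial rotations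
  have hNfix : ∀ α : Multiplicative (AddCircle (1 : ℝ)), α ≠ 1 → φ (rot α) N = N := by
    intro α hα
    have hm : N ∈ ({N, S} : Set S2) := Or.inl rfl
    rw [← hfix α hα] at hm
    exact hm
  have hSfix : ∀ α : Multiplicative (AddCircle (1 : ℝ)), α ≠ 1 → φ (rot α) S = S := by
    intro α hα
    have hm : S ∈ ({N, S} : Set S2) := Or.inr rfl
    rw [← hfix α hα] at hm
    exact hm
  -- the subgroup preserving the pair {N, S}
  let H : Subgroup G :=
    { carrier := {g | (φ g N = N ∧ φ g S = S) ∨ (φ g N = S ∧ φ g S = N)}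
      one_mem' := by
        left
        constructor <;> · rw [map_one]; rfl
      mul_mem' := by
        rintro a b (⟨ha1, ha2⟩ | ⟨ha1, ha2⟩) (⟨hb1, hb2⟩ | ⟨hb1, hb2⟩)
        · left; exact ⟨by rw [hmul, hb1, ha1], by rw [hmul, hb2, ha2]⟩
        · right; exact ⟨by rw [hmul, hb1, ha2], by rw [hmul, hb2, ha1]⟩
        · right; exact ⟨by rw [hmul, hb1, ha1], by rw [hmul, hb2, ha2]⟩
        · left; exact ⟨by rw [hmul, hb1, ha2], by rw [hmul, hb2, ha1]⟩
      inv_mem' := by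
        rintro g (⟨h1, h2⟩ | ⟨h1, h2⟩)
        · left; exact ⟨hinv g N N h1, hinv g S S h2⟩
        · right; exact ⟨hinv g S N h2, hinv g N S h1⟩ }
  -- every element of G preserves the pair {N, S}
  have hH : ∀ g : G, g ∈ H := by
    have hgen : {g : G | ∃ α : Multiplicative (AddCircle (1 : ℝ)), α ≠ 1 ∧
        (∃ n : ℕ, 0 < n ∧ α ^ n = 1) ∧ g * rot α = rot α * g} ⊆ (H : Set G) := by
      rintro g ⟨α, hα, -, hcomm⟩
      have hgN : φ g N ∈ ({N, S} : Set S2) := by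
        rw [← hfix α hα]
        show φ (rot α) (φ g N) = φ g N
        rw [← hmul, ← hcomm, hmul, hNfix α hα]
      have hgS : φ g S ∈ ({N, S} : Set S2) := by
        rw [← hfix α hα]
        show φ (rot α) (φ g S) = φ g S
        rw [← hmul, ← hcomm, hmul, hSfix α hα]
      rcases hgN with h1 | h1 <;> rcases hgS with h2 | h2
      · exact absurd ((φ g).injective (h1.trans h2.symm)) hNS
      · exact Or.inl ⟨h1, h2⟩
      · exact Or.inr ⟨h1, h2⟩
      · exact absurd ((φ g).injective (h1.trans h2.symm)) hNS
    have hle : Subgroup.closure {g : G | ∃ α : Multiplicative (AddCircle (1 : ℝ)), α ≠ 1 ∧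
        (∃ n : ℕ, 0 < n ∧ α ^ n = 1) ∧ g * rot α = rot α * g} ≤ H :=
      (Subgroup.closure_le H).mpr hgen
    intro g
    exact hle (by rw [hB]; trivial)
  -- the subgroup fixing both poles
  let K : Subgroup G :=
    { carrier := {g | φ g N = N ∧ φ g S = S}
      one_mem' := by constructor <;> · rw [map_one]; rfl
      mul_mem' := by
        rintro a b ⟨ha1, ha2⟩ ⟨hb1, hb2⟩
        exact ⟨by rw [hmul, hb1, ha1], by rw [hmul, hb2, ha2]⟩
      inv_mem' := by
        rintro g ⟨h1, h2⟩
        exact ⟨hinv g N N h1, hinv g S S h2⟩ }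
  have hKnormal : K.Normal := by
    constructor
    rintro k ⟨hk1, hk2⟩ g
    rcases hH g with ⟨hg1, hg2⟩ | ⟨hg1, hg2⟩
    · constructor
      · rw [hmul, hmul, hinv g N N hg1, hk1, hg1]
      · rw [hmul, hmul, hinv g S S hg2, hk2, hg2]
    · constructor
      · rw [hmul, hmul, hinv g S N hg2, hk2, hg2]
      · rw [hmul, hmul, hinv g N S hg1, hk1, hg1]
  have hKtop : K = ⊤ := by
    rcases hsimple K hKnormal with hbot | htop
    · exfalso
      have hmem : rot α₀ ∈ K := ⟨hNfix α₀ hα₀ne, hSfix α₀ hα₀ne⟩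
      rw [hbot, Subgroup.mem_bot] at hmem
      exact hα₀ne (hrot (hmem.trans (map_one rot).symm))
    · exact htop
  refine ⟨N, S, hNS, ?_⟩
  ext p
  simp only [Set.mem_setOf_eq]
  constructor
  · intro h
    have hp : p ∈ {q : S2 | φ (rot α₀) q = q} := h (rot α₀)
    rw [hfix α₀ hα₀ne] at hp
    exact hp
  · intro hp g
    have hg : g ∈ K := by rw [hKtop]; trivial
    rcases hp with rfl | rfl
    · exact hg.1
    · exact hg.2
end
end

section
/- Let $\psi : \mathrm{Homeo}_c(\mathbb{R}) \to \mathrm{Homeo}(\mathbb{R})$ be an injective continuous group morphism whose image has no global fixed point, and suppose for every point $x$ the fixed-point set $F_x$ of $\psi(G_x)$ is a single point $h(x)$, with the sets $F_x$ pairwise disjoint. Then the map $h : \mathbb{R} \to \mathbb{R}$, $x \mapsto$ the unique point of $F_x$, is a homeomorphism, and $\psi(f) \circ h = h \circ f$ for every $f \in \mathrm{Homeo}_c(\mathbb{R})$. -/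
noncomputable section

/-!
Conjugation by `f` carries `G_x` onto `G_{f x}`, so `ψ f` maps `F_x` into `F_{f x}`; this is the
equivariance `ψ f ∘ h = h ∘ f`, and disjointness of the `F_x` makes `h` injective. Continuity
comes from writing `h y = ψ(φ_y)(h 0)` for a continuous path `y ↦ φ_y` in `Homeo_c(ℝ)` with
`φ_y 0 = y`. Each `ψ f` fixes the points `h y` for `y` beyond the support of `f`, hence is
increasing; so if the `ψ`-invariant range of `h` were bounded, its supremum or infimum would be a
global fixed point. Being connected and unbounded, the range is all of `ℝ`.
-/

open Set Filter Topology Function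

theorem continuous_uncurry_of_rightInverse {T α : Type*} [TopologicalSpace T] [LinearOrder α]
    [TopologicalSpace α] [OrderTopology α] {F G : T → α → α}
    (hF : Continuous (uncurry F)) (hmono : ∀ t, StrictMono (F t))
    (hFG : ∀ t v, F t (G t v) = v) : Continuous (uncurry G) := by
  refine continuous_iff_continuousAt.2 fun p₀ => tendsto_order.2 ⟨fun a ha => ?_, fun b hb => ?_⟩
  · have hopen : IsOpen {p : T × α | F p.1 a < p.2} :=
      isOpen_lt (hF.comp (continuous_fst.prodMk continuous_const)) continuous_snd
    have hp₀ : F p₀.1 a < p₀.2 := hFG p₀.1 p₀.2 ▸ hmono p₀.1 ha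
    filter_upwards [hopen.mem_nhds hp₀] with p hp
    exact (hmono p.1).lt_iff_lt.1 (hFG p.1 p.2 ▸ hp)
  · have hopen : IsOpen {p : T × α | p.2 < F p.1 b} :=
      isOpen_lt continuous_snd (hF.comp (continuous_fst.prodMk continuous_const))
    have hp₀ : p₀.2 < F p₀.1 b := hFG p₀.1 p₀.2 ▸ hmono p₀.1 hb
    filter_upwards [hopen.mem_nhds hp₀] with p hp
    exact (hmono p.1).lt_iff_lt.1 (hFG p.1 p.2 ▸ hp)

theorem continuous_homeomorph_of_continuous_uncurry {T X Y : Type} [TopologicalSpace T]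
    [TopologicalSpace X] [TopologicalSpace Y] (e : T → X ≃ₜ Y)
    (h₁ : Continuous fun p : T × X => e p.1 p.2)
    (h₂ : Continuous fun p : T × Y => (e p.1).symm p.2) : Continuous e :=
  continuous_induced_rng.2 <| (ContinuousMap.continuous_of_continuous_uncurry _ h₁).prodMk
    (ContinuousMap.continuous_of_continuous_uncurry _ h₂)

theorem continuous_homeomorph_apply {X Y : Type} [TopologicalSpace X] [TopologicalSpace Y]
    (x : X) : Continuous fun e : X ≃ₜ Y => e x :=
  have hpair : Continuous fun e : X ≃ₜ Y =>
      ((⟨e, e.continuous⟩ : C(X, Y)), (⟨e.symm, e.symm.continuous⟩ : C(Y, X))) :=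
    continuous_induced_dom
  (continuous_eval_const (F := C(X, Y)) x).comp hpair.fst

theorem isHomeomorph_of_continuous_bijective_real {f : ℝ → ℝ} (hf : Continuous f)
    (hbij : Bijective f) : IsHomeomorph f := by
  refine isHomeomorph_iff_isEmbedding_surjective.2 ⟨?_, hbij.2⟩
  rcases hf.strictMono_of_inj hbij.1 with hmono | hanti
  · exact hmono.isEmbedding_of_ordConnected (hbij.2.range_eq ▸ ordConnected_univ)
  · have hneg : StrictMono (Neg.neg ∘ f) := fun a b hab => neg_lt_neg (hanti hab)
    have hemb := (Homeomorph.neg ℝ).isEmbedding.comp <| hneg.isEmbedding_of_ordConnected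
      ((neg_surjective.comp hbij.2).range_eq ▸ ordConnected_univ)
    simpa [comp_def] using hemb

theorem Homeomorph.strictMono_of_apply_eq_self (e : ℝ ≃ₜ ℝ) {a b : ℝ} (hab : a ≠ b)
    (ha : e a = a) (hb : e b = b) : StrictMono e := by
  refine (e.continuous.strictMono_of_inj e.injective).resolve_right fun hanti => ?_
  rcases hab.lt_or_gt with h | h
  · exact (hanti h).not_gt (by rwa [ha, hb])
  · exact (hanti h).not_gt (by rwa [ha, hb])

/-- The tent has radius `|s| + 1`, so `s` times its slope stays below `1` in absolute value
and the map is increasing. -/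
def slide (s u : ℝ) : ℝ := u + s * max 0 (1 - |u| / (|s| + 1))

theorem slide_zero_right (s : ℝ) : slide s 0 = s := by
  simp [slide]

theorem slide_of_le_abs {s u : ℝ} (hu : |s| + 1 ≤ |u|) : slide s u = u := by
  have : 1 ≤ |u| / (|s| + 1) := (one_le_div (by positivity)).2 hu
  simp [slide, max_eq_left (by linarith : 1 - |u| / (|s| + 1) ≤ 0)]

theorem continuous_slide : Continuous (uncurry slide) := by
  unfold slide
  fun_prop (disch := intro p; positivity)

theorem slide_strictMono (s : ℝ) : StrictMono (slide s) := by
  intro u w huw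
  have hr : 0 < |s| + 1 := by positivity
  have htent : |max 0 (1 - |w| / (|s| + 1)) - max 0 (1 - |u| / (|s| + 1))| ≤
      (w - u) / (|s| + 1) := by
    rw [max_comm 0, max_comm 0]
    refine (abs_max_sub_max_le_abs _ _ _).trans ?_
    rw [show 1 - |w| / (|s| + 1) - (1 - |u| / (|s| + 1)) = -((|w| - |u|) / (|s| + 1)) by ring,
      abs_neg, abs_div, abs_of_pos hr]
    gcongr
    exact (abs_abs_sub_abs_le_abs_sub w u).trans (abs_of_pos (sub_pos.2 huw)).le
  have hpush : |s * (max 0 (1 - |w| / (|s| + 1)) - max 0 (1 - |u| / (|s| + 1)))| <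
      w - u := by
    rw [abs_mul]
    calc |s| * |_| ≤ |s| * ((w - u) / (|s| + 1)) := by gcongr
      _ < w - u := by
        rw [mul_div_assoc', div_lt_iff₀ hr]
        nlinarith [sub_pos.2 huw]
  simp only [slide]
  linarith [neg_abs_le (s * (max 0 (1 - |w| / (|s| + 1)) - max 0 (1 - |u| / (|s| + 1))))]

theorem slide_surjective (s : ℝ) : Surjective (slide s) := by
  have hcont : Continuous (slide s) := continuous_slide.comp (Continuous.prodMk_right s)
  refine hcont.surjective ?_ ?_
  · refine tendsto_id.congr' ?_
    filter_upwards [eventually_ge_atTop (|s| + 1)] with u hu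
    exact (slide_of_le_abs (hu.trans (le_abs_self u))).symm
  · refine tendsto_id.congr' ?_
    filter_upwards [eventually_le_atBot (-(|s| + 1))] with u hu
    exact (slide_of_le_abs (s := s) (u := u) (by linarith [neg_le_abs u])).symm

def slideHomeo (s : ℝ) : ℝ ≃ₜ ℝ :=
  ((slide_strictMono s).orderIsoOfSurjective _ (slide_surjective s)).toHomeomorph

theorem slideHomeo_apply (s u : ℝ) : slideHomeo s u = slide s u := rfl

theorem slideHomeo_mem_homeoC (s : ℝ) : slideHomeo s ∈ HomeoC := by
  refine ⟨Metric.closedBall 0 (|s| + 1), isCompact_closedBall 0 _, fun u hu => ?_⟩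
  rw [Metric.mem_closedBall, Real.dist_0_eq_abs, not_le] at hu
  exact slide_of_le_abs hu.le

theorem continuous_slideHomeo : Continuous slideHomeo :=
  continuous_homeomorph_of_continuous_uncurry _ continuous_slide <|
    continuous_uncurry_of_rightInverse continuous_slide slide_strictMono
      fun s v => (slideHomeo s).apply_symm_apply v

theorem FixesNbhd.conj_s16 {f g : ℝ ≃ₜ ℝ} {A : Set ℝ} (hg : FixesNbhd g (f '' A)) :
    FixesNbhd (f⁻¹ * g * f) A := by
  obtain ⟨U, hU, hAU, hfix⟩ := hg
  refine ⟨f ⁻¹' U, hU.preimage f.continuous, image_subset_iff.1 hAU, fun u hu => ?_⟩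
  change f.symm (g (f u)) = u
  rw [hfix _ hu, f.symm_apply_apply]

theorem HomeoC.exists_forall_gt_fixesNbhd (f : HomeoC) :
    ∃ M, ∀ y, M < y → FixesNbhd (f : ℝ ≃ₜ ℝ) {y} := by
  obtain ⟨C, hC, hfix⟩ := f.2
  obtain ⟨M, hM⟩ := hC.bddAbove
  exact ⟨M, fun y hy => ⟨Ioi M, isOpen_Ioi, singleton_subset_iff.2 hy,
    fun u hu => hfix u fun huC => (hM huC).not_gt hu⟩⟩

section Equivariance

variable {ψ : HomeoC →* (ℝ ≃ₜ ℝ)}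

theorem map_mem_fixSet {x p : ℝ} (hp : p ∈ FixSet ψ x) (f : HomeoC) :
    ψ f p ∈ FixSet ψ ((f : ℝ ≃ₜ ℝ) x) := by
  intro g hg
  have hconj : ψ (f⁻¹ * g * f) p = p := hp _ (FixesNbhd.conj_s16 (by simpa using hg))
  calc ψ g (ψ f p) = ψ f (ψ (f⁻¹ * g * f) p) := by simp
    _ = ψ f p := by rw [hconj]

theorem apply_eq_of_fixSet_eq_singleton {h : ℝ → ℝ} (hsingle : ∀ x, FixSet ψ x = {h x})
    (f : HomeoC) (x : ℝ) : ψ f (h x) = h ((f : ℝ ≃ₜ ℝ) x) := by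
  have := map_mem_fixSet ((hsingle x).symm ▸ rfl : h x ∈ FixSet ψ x) f
  rwa [hsingle] at this

theorem strictMono_map_of_injective {h : ℝ → ℝ} (hmem : ∀ x, h x ∈ FixSet ψ x)
    (hh : Injective h) (f : HomeoC) : StrictMono (ψ f) := by
  obtain ⟨M, hM⟩ := HomeoC.exists_forall_gt_fixesNbhd f
  exact (ψ f).strictMono_of_apply_eq_self (hh.ne (by norm_num : M + 1 ≠ M + 2))
    (hmem _ f (hM _ (by linarith))) (hmem _ f (hM _ (by linarith)))

theorem unbounded_of_forall_image_eq (hnofix : ¬ ∃ p : ℝ, ∀ f : HomeoC, ψ f p = p)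
    (hmono : ∀ f, StrictMono (ψ f)) {S : Set ℝ} (hS : S.Nonempty)
    (hinv : ∀ f, ψ f '' S = S) : ¬ BddBelow S ∧ ¬ BddAbove S := by
  refine ⟨fun hbdd => hnofix ⟨sInf S, fun f => ?_⟩, fun hbdd => hnofix ⟨sSup S, fun f => ?_⟩⟩
  · rw [(hmono f).monotone.map_csInf_of_continuousAt (ψ f).continuous.continuousAt hS hbdd,
      hinv]
  · rw [(hmono f).monotone.map_csSup_of_continuousAt (ψ f).continuous.continuousAt hS hbdd,
      hinv]

theorem continuous_of_forall_apply_eq (hcont : Continuous ψ) {h : ℝ → ℝ}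
    (hequiv : ∀ (f : HomeoC) (x : ℝ), ψ f (h x) = h ((f : ℝ ≃ₜ ℝ) x)) : Continuous h := by
  have hslide : h = fun y => ψ ⟨slideHomeo y, slideHomeo_mem_homeoC y⟩ (h 0) := by
    funext y
    rw [hequiv, Subgroup.coe_mk, slideHomeo_apply, slide_zero_right]
  rw [hslide]
  exact (continuous_homeomorph_apply _).comp (hcont.comp (continuous_slideHomeo.subtype_mk _))

theorem surjective_of_forall_apply_eq (hcont : Continuous ψ)
    (hnofix : ¬ ∃ p : ℝ, ∀ f : HomeoC, ψ f p = p) (hmono : ∀ f, StrictMono (ψ f))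
    {h : ℝ → ℝ} (hequiv : ∀ (f : HomeoC) (x : ℝ), ψ f (h x) = h ((f : ℝ ≃ₜ ℝ) x)) :
    Surjective h := by
  have hinv : ∀ f, ψ f '' range h = range h := fun f => by
    rw [← range_comp, show ψ f ∘ h = h ∘ (f : ℝ ≃ₜ ℝ) from funext (hequiv f), range_comp,
      (f : ℝ ≃ₜ ℝ).surjective.range_eq, image_univ]
  obtain ⟨hbot, htop⟩ := unbounded_of_forall_image_eq hnofix hmono (range_nonempty h) hinv
  exact range_eq_univ.1 <|
    (isPreconnected_range (continuous_of_forall_apply_eq hcont hequiv)).eq_univ_of_unbounded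
      hbot htop

end Equivariance

theorem stmt16_general (ψ : HomeoC →* (ℝ ≃ₜ ℝ))
    (hcont : Continuous ψ)
    (hnofix : ¬ ∃ p : ℝ, ∀ f : HomeoC, ψ f p = p)
    (h : ℝ → ℝ) (hsingle : ∀ x : ℝ, FixSet ψ x = {h x})
    (hdisj : ∀ x y : ℝ, x ≠ y → Disjoint (FixSet ψ x) (FixSet ψ y)) :
    IsHomeomorph h ∧ ∀ (f : HomeoC) (x : ℝ), ψ f (h x) = h ((f : ℝ ≃ₜ ℝ) x) := by
  have hmem : ∀ x, h x ∈ FixSet ψ x := fun x => (hsingle x).symm ▸ rfl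
  have hinj : Injective h := fun a b hab => by_contra fun hne =>
    disjoint_left.1 (hdisj a b hne) (hmem a) (hab ▸ hmem b)
  have hequiv := apply_eq_of_fixSet_eq_singleton hsingle
  have hsurj := surjective_of_forall_apply_eq hcont hnofix (strictMono_map_of_injective hmem hinj)
    hequiv
  exact ⟨isHomeomorph_of_continuous_bijective_real (continuous_of_forall_apply_eq hcont hequiv)
    ⟨hinj, hsurj⟩, hequiv⟩

/-- If each `F_x` is the single point `{h x}` and the `F_x` are pairwise disjoint, then
`h` is a homeomorphism of `ℝ` and `ψ(f) ∘ h = h ∘ f` for every `f ∈ Homeo_c(ℝ)`. -/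
theorem stmt16 (ψ : HomeoC →* (ℝ ≃ₜ ℝ)) (hinj : Function.Injective ψ)
    (hcont : Continuous ψ)
    (hnofix : ¬ ∃ p : ℝ, ∀ f : HomeoC, ψ f p = p)
    (h : ℝ → ℝ) (hsingle : ∀ x : ℝ, FixSet ψ x = {h x})
    (hdisj : ∀ x y : ℝ, x ≠ y → Disjoint (FixSet ψ x) (FixSet ψ y)) :
    IsHomeomorph h ∧ ∀ (f : HomeoC) (x : ℝ), ψ f (h x) = h ((f : ℝ ≃ₜ ℝ) x) :=
  stmt16_general ψ hcont hnofix h hsingle hdisj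
end
end
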